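/- arXiv:2203.01423 — 2 statements merged into one kernel-verified Lean document; each statement's English description precedes it below -/
import Mathlib

section
/- Let X = L ∪ J ∪ R be a continuum in the class 𝒞 such that L and R are nondegenerate and L ∩ R = ∅. Then 𝓜(X) ⊆ 𝓜(J) ∪ 𝓜(L) ∪ 𝓜(R) ∪ 𝓜*(L;R), and the four systems 𝓜(J), 𝓜(L), 𝓜(R), 𝓜*(L;R) are pairwise disjoint. That is, every minimal set M on X satisfies exactly one of: M ∈ 𝓜(J), M ∈ 𝓜(L), M ∈ 𝓜(R), or M ∈ 𝓜*(L;R). -/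
open Set Topology

/-- A topological space has no isolated points if no singleton is open. -/
def NoIsolatedPoints (Y : Type*) [TopologicalSpace Y] : Prop :=
  ∀ y : Y, ¬ IsOpen ({y} : Set Y)

/-- `(M, f|_M)` is a minimal dynamical system with `f(M) = M`:
`M` is nonempty, `f(M) = M`, and `M` has no nonempty proper closed subset
invariant under `f|_M`. -/
def MinimalSystemOn {Y : Type*} [TopologicalSpace Y] (f : Y → Y) (M : Set Y) : Prop :=
  M.Nonempty ∧ f '' M = M ∧
    ∀ N, N ⊆ M → N.Nonempty → IsClosed N → f '' N ⊆ N → N = M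

/-- The system `𝓜(Y)` of all compact sets `M ⊆ Y` such that there is a continuous
`f : Y → Y` with `f(M) = M` and `(M, f|_M)` a minimal dynamical system. -/
def MSpace (Y : Type*) [TopologicalSpace Y] : Set (Set Y) :=
  {M | IsCompact M ∧ ∃ f : Y → Y, Continuous f ∧ MinimalSystemOn f M}

/-- `𝓜(Z)` for a subspace `Z ⊆ X` (carrying the subspace topology),
viewed as a system of subsets of `X`. -/
def MSetIn {X : Type*} [TopologicalSpace X] (Z : Set X) : Set (Set X) :=
  {M | ∃ M' ∈ MSpace (↥Z), M = Subtype.val '' M'}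

/-- `𝓜*(L; R)`: members of `𝓜(L ∪ R)` (`= 𝓜(L ⊔ R)` for disjoint `L, R`) such that
`M ∩ L` and `M ∩ R` have the same cardinality. -/
def MStarIn {X : Type*} [TopologicalSpace X] (L R : Set X) : Set (Set X) :=
  {M | M ∈ MSetIn (L ∪ R) ∧ Cardinal.mk ↥(M ∩ L) = Cardinal.mk ↥(M ∩ R)}

/-- An arc: a set homeomorphic to `[0,1]`. -/
def IsArc {X : Type*} [TopologicalSpace X] (A : Set X) : Prop :=
  Nonempty (↥A ≃ₜ ↥(Set.Icc (0:ℝ) 1))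

/-- A ray: a set homeomorphic to `[0,∞)`. -/
def IsRaySet {X : Type*} [TopologicalSpace X] (A : Set X) : Prop :=
  Nonempty (↥A ≃ₜ ↥(Set.Ici (0:ℝ)))

/-- A Cantor set: nonempty, compact, totally disconnected, without isolated points
(metrizability is inherited from the ambient space). -/
def IsCantorSet {X : Type*} [TopologicalSpace X] (M : Set X) : Prop :=
  M.Nonempty ∧ IsCompact M ∧ IsTotallyDisconnected M ∧ NoIsolatedPoints ↥M

/-- A circle: a set homeomorphic to the unit circle `S¹ ⊆ ℂ`. -/
def IsCircleSet {X : Type*} [TopologicalSpace X] (C : Set X) : Prop :=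
  Nonempty (↥C ≃ₜ ↥(Metric.sphere (0:ℂ) 1))

/-- A cantoroid: a nonempty compact (metrizable) set without isolated points in which
the union of the degenerate (singleton) connected components is dense. -/
def IsCantoroid {X : Type*} [TopologicalSpace X] (M : Set X) : Prop :=
  M.Nonempty ∧ IsCompact M ∧ NoIsolatedPoints ↥M ∧
    Dense {x : ↥M | connectedComponent x = {x}}

/-- A union of finitely many (at least one) pairwise disjoint circles. -/
def FinUnionDisjCircles {X : Type*} [TopologicalSpace X] (M : Set X) : Prop :=
  ∃ (n : ℕ) (C : Fin n → Set X), 0 < n ∧ (∀ i, IsCircleSet (C i)) ∧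
    Pairwise (Function.onFun Disjoint C) ∧ M = ⋃ i, C i

/-- A local dendrite: a locally connected continuum containing only finitely many circles. -/
def IsLocalDendrite {X : Type*} [TopologicalSpace X] (L : Set X) : Prop :=
  IsCompact L ∧ IsConnected L ∧ LocallyConnectedSpace ↥L ∧
    {C : Set X | C ⊆ L ∧ IsCircleSet C}.Finite

/-- The decomposition `X = L ∪ J ∪ R` witnessing that the continuum `X` belongs to the
class `𝒞`: `J` is a free interval dense in `X`; `L` and `R` are locally connected
subcontinua of `X` disjoint from `J`; and there are rays `J_L, J_R` with
`J = J_L ∪ J_R` such that `L ∪ J_L` is a compactification of `J_L` and `R ∪ J_R` is a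
compactification of `J_R`. -/
structure ClassC {X : Type*} [TopologicalSpace X] (L J R : Set X) : Prop where
  union_eq : L ∪ J ∪ R = Set.univ
  openJ : IsOpen J
  freeJ : Nonempty (↥J ≃ₜ ↥(Set.Ioo (0:ℝ) 1))
  denseJ : Dense J
  compactL : IsCompact L
  connL : IsConnected L
  locConnL : LocallyConnectedSpace ↥L
  compactR : IsCompact R
  connR : IsConnected R
  locConnR : LocallyConnectedSpace ↥R
  disjLJ : Disjoint L J
  disjRJ : Disjoint R J
  rays : ∃ JL JR : Set X, JL ∪ JR = J ∧ IsRaySet JL ∧ IsRaySet JR ∧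
    IsCompact (L ∪ JL) ∧ L ∪ JL ⊆ closure JL ∧
    IsCompact (R ∪ JR) ∧ R ∪ JR ⊆ closure JR

namespace Stmt3Aux

noncomputable section

/-! ### The flip homeomorphism of `Ioo 0 1` -/

def flipIoo : ↥(Ioo (0:ℝ) 1) ≃ₜ ↥(Ioo (0:ℝ) 1) where
  toFun y := ⟨1 - y.1, ⟨by linarith [y.2.2], by linarith [y.2.1]⟩⟩
  invFun y := ⟨1 - y.1, ⟨by linarith [y.2.2], by linarith [y.2.1]⟩⟩
  left_inv y := Subtype.ext (by simp)
  right_inv y := Subtype.ext (by simp)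
  continuous_toFun := Continuous.subtype_mk (continuous_const.sub continuous_subtype_val) _
  continuous_invFun := Continuous.subtype_mk (continuous_const.sub continuous_subtype_val) _

@[simp] lemma flipIoo_coe (y : ↥(Ioo (0:ℝ) 1)) : ((flipIoo y : ↥(Ioo (0:ℝ) 1)) : ℝ) = 1 - y := rfl

variable {X : Type*} [TopologicalSpace X]

lemma trans_flipIoo_flipIoo {J : Set X} (e : ↥J ≃ₜ ↥(Ioo (0:ℝ) 1)) :
    (e.trans flipIoo).trans flipIoo = e := by
  apply Homeomorph.ext
  intro j
  apply Subtype.ext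
  simp [flipIoo, Homeomorph.trans]

/-! ### The sets `loSet` and `midSet` -/

def loSet (J : Set X) (e : ↥J ≃ₜ ↥(Ioo (0:ℝ) 1)) (s : ℝ) : Set X :=
  Subtype.val '' (e ⁻¹' {y | (y : ℝ) < s})

def midSet (J : Set X) (e : ↥J ≃ₜ ↥(Ioo (0:ℝ) 1)) (t s : ℝ) : Set X :=
  Subtype.val '' (e ⁻¹' {y | t ≤ (y : ℝ) ∧ (y : ℝ) ≤ s})

variable {J : Set X} {e : ↥J ≃ₜ ↥(Ioo (0:ℝ) 1)} {s t : ℝ}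

lemma loSet_subset_J : loSet J e s ⊆ J := by
  rintro x ⟨j, -, rfl⟩; exact j.2

lemma midSet_subset_J : midSet J e t s ⊆ J := by
  rintro x ⟨j, -, rfl⟩; exact j.2

lemma mem_loSet {x : X} : x ∈ loSet J e s ↔ ∃ hx : x ∈ J, ((e ⟨x, hx⟩ : ↥(Ioo (0:ℝ) 1)) : ℝ) < s := by
  constructor
  · rintro ⟨j, hj, rfl⟩; exact ⟨j.2, hj⟩
  · rintro ⟨hx, h⟩; exact ⟨⟨x, hx⟩, h, rfl⟩

lemma mem_midSet {x : X} : x ∈ midSet J e t s ↔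
    ∃ hx : x ∈ J, t ≤ ((e ⟨x, hx⟩ : ↥(Ioo (0:ℝ) 1)) : ℝ) ∧ ((e ⟨x, hx⟩ : ↥(Ioo (0:ℝ) 1)) : ℝ) ≤ s := by
  constructor
  · rintro ⟨j, hj, rfl⟩; exact ⟨j.2, hj⟩
  · rintro ⟨hx, h⟩; exact ⟨⟨x, hx⟩, h, rfl⟩

lemma loSet_mono (h : s ≤ t) : loSet J e s ⊆ loSet J e t :=
  image_mono (preimage_mono fun _ hy => lt_of_lt_of_le hy h)

lemma isOpen_loSet (hJ : IsOpen J) : IsOpen (loSet J e s) := by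
  apply hJ.isOpenMap_subtype_val
  exact (isOpen_Iio.preimage continuous_subtype_val).preimage e.continuous

lemma loSet_nonempty (hs : 0 < s) : (loSet J e s).Nonempty := by
  have hr1 : min (s/2) (1/2) ∈ Ioo (0:ℝ) 1 :=
    ⟨lt_min (by linarith) (by norm_num), lt_of_le_of_lt (min_le_right _ _) (by norm_num)⟩
  refine ⟨(e.symm ⟨_, hr1⟩ : ↥J), mem_loSet.mpr ⟨(e.symm ⟨_, hr1⟩).2, ?_⟩⟩
  rw [show (⟨((e.symm ⟨_, hr1⟩ : ↥J) : X), (e.symm ⟨_, hr1⟩).2⟩ : ↥J) = e.symm ⟨_, hr1⟩ from rfl,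
    e.apply_symm_apply]
  exact lt_of_le_of_lt (min_le_left _ _) (by linarith)

lemma loSet_trans_flip (e : ↥J ≃ₜ ↥(Ioo (0:ℝ) 1)) (s : ℝ) :
    loSet J (e.trans flipIoo) s = Subtype.val '' (e ⁻¹' {y | 1 - s < (y : ℝ)}) := by
  have key : (e.trans flipIoo) ⁻¹' {y | (y : ℝ) < s} = e ⁻¹' {y | 1 - s < (y : ℝ)} := by
    ext j
    constructor
    · intro h
      have h' : ((flipIoo (e j) : ↥(Ioo (0:ℝ) 1)) : ℝ) < s := h
      rw [flipIoo_coe] at h'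
      show 1 - s < ((e j : ↥(Ioo (0:ℝ) 1)) : ℝ)
      linarith
    · intro h
      have h' : 1 - s < ((e j : ↥(Ioo (0:ℝ) 1)) : ℝ) := h
      show ((flipIoo (e j) : ↥(Ioo (0:ℝ) 1)) : ℝ) < s
      rw [flipIoo_coe]
      linarith
  unfold loSet
  rw [key]

lemma isPreconnected_loSet : IsPreconnected (loSet J e s) := by
  apply IsPreconnected.image _ _ continuous_subtype_val.continuousOn
  have h1 : IsPreconnected ({y : ↥(Ioo (0:ℝ) 1) | (y : ℝ) < s}) := by
    apply Topology.IsInducing.subtypeVal.isPreconnected_image.mp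
    have h2 : (Subtype.val '' {y : ↥(Ioo (0:ℝ) 1) | (y : ℝ) < s}) = Ioo (0:ℝ) 1 ∩ Iio s := by
      ext x
      constructor
      · rintro ⟨y, hy, rfl⟩; exact ⟨y.2, hy⟩
      · rintro ⟨h1, h2⟩; exact ⟨⟨x, h1⟩, h2, rfl⟩
    rw [h2, Set.Ioo_inter_Iio]
    exact isPreconnected_Ioo
  have h3 : e ⁻¹' {y | (y : ℝ) < s} = e.symm '' {y | (y : ℝ) < s} := by
    rw [Homeomorph.image_symm]
  rw [h3]
  exact h1.image _ e.symm.continuous.continuousOn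

lemma isPreconnected_midSet (ht : 0 < t) (hs : s < 1) : IsPreconnected (midSet J e t s) := by
  apply IsPreconnected.image _ _ continuous_subtype_val.continuousOn
  have h1 : IsPreconnected ({y : ↥(Ioo (0:ℝ) 1) | t ≤ (y : ℝ) ∧ (y : ℝ) ≤ s}) := by
    apply Topology.IsInducing.subtypeVal.isPreconnected_image.mp
    have h2 : (Subtype.val '' {y : ↥(Ioo (0:ℝ) 1) | t ≤ (y : ℝ) ∧ (y : ℝ) ≤ s}) = Icc t s := by
      ext x
      constructor
      · rintro ⟨y, hy, rfl⟩; exact hy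
      · rintro ⟨h1, h2⟩; exact ⟨⟨x, ⟨lt_of_lt_of_le ht h1, lt_of_le_of_lt h2 hs⟩⟩, ⟨h1, h2⟩, rfl⟩
    rw [h2]
    exact isPreconnected_Icc
  have h3 : e ⁻¹' {y | t ≤ (y : ℝ) ∧ (y : ℝ) ≤ s} = e.symm '' {y | t ≤ (y : ℝ) ∧ (y : ℝ) ≤ s} := by
    rw [Homeomorph.image_symm]
  rw [h3]
  exact h1.image _ e.symm.continuous.continuousOn

lemma isCompact_midSet (ht : 0 < t) (hs : s < 1) : IsCompact (midSet J e t s) := by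
  apply IsCompact.image _ continuous_subtype_val
  have h3 : e ⁻¹' {y | t ≤ (y : ℝ) ∧ (y : ℝ) ≤ s} = e.symm '' {y | t ≤ (y : ℝ) ∧ (y : ℝ) ≤ s} := by
    rw [Homeomorph.image_symm]
  rw [h3]
  apply IsCompact.image _ e.symm.continuous
  rw [Subtype.isCompact_iff]
  have h2 : (Subtype.val '' {y : ↥(Ioo (0:ℝ) 1) | t ≤ (y : ℝ) ∧ (y : ℝ) ≤ s}) = Icc t s := by
    ext x
    constructor
    · rintro ⟨y, hy, rfl⟩; exact hy
    · rintro ⟨h1, h2'⟩; exact ⟨⟨x, ⟨lt_of_lt_of_le ht h1, lt_of_le_of_lt h2' hs⟩⟩, ⟨h1, h2'⟩, rfl⟩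
  rw [h2]
  exact isCompact_Icc

lemma coord_le_of_mem_closure_loSet {x : X} (hx : x ∈ J) (h : x ∈ closure (loSet J e s)) :
    ((e ⟨x, hx⟩ : ↥(Ioo (0:ℝ) 1)) : ℝ) ≤ s := by
  have h1 : (⟨x, hx⟩ : ↥J) ∈ closure (e ⁻¹' {y | (y : ℝ) < s}) := by
    rw [closure_subtype]
    exact h
  have h2 := (e.continuous.closure_preimage_subset _) h1
  have h3 := (continuous_subtype_val.closure_preimage_subset (Iio s)) h2
  rwa [closure_Iio] at h3

lemma isPreconnected_J_of_homeo (e : ↥J ≃ₜ ↥(Ioo (0:ℝ) 1)) : IsPreconnected J := by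
  haveI : ConnectedSpace ↥(Ioo (0:ℝ) 1) := Subtype.connectedSpace (isConnected_Ioo (by norm_num))
  have h : range (fun y : ↥(Ioo (0:ℝ) 1) => ((e.symm y : ↥J) : X)) = J := by
    ext x
    constructor
    · rintro ⟨y, rfl⟩; exact (e.symm y).2
    · intro hx; exact ⟨e ⟨x, hx⟩, by simp⟩
  rw [← h]
  exact isPreconnected_range (continuous_subtype_val.comp e.symm.continuous)

lemma J_nonempty_of_homeo (e : ↥J ≃ₜ ↥(Ioo (0:ℝ) 1)) : J.Nonempty :=
  ⟨(e.symm ⟨1/2, by norm_num⟩ : ↥J), (e.symm ⟨1/2, by norm_num⟩).2⟩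


/-! ### Charts -/

structure Chart (L J R : Set X) where
  openJ : IsOpen J
  denseJ : Dense J
  union3 : L ∪ J ∪ R = univ
  disjLJ : Disjoint L J
  disjRJ : Disjoint R J
  disjLR : Disjoint L R
  closedL : IsClosed L
  closedR : IsClosed R
  ntL : L.Nontrivial
  ntR : R.Nontrivial
  e : ↥J ≃ₜ ↥(Ioo (0:ℝ) 1)
  clLo : ∀ s : ℝ, s < 1 → ∀ x ∈ closure (loSet J e s),
    x ∈ L ∨ ∃ hx : x ∈ J, ((e ⟨x, hx⟩ : ↥(Ioo (0:ℝ) 1)) : ℝ) ≤ s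
  denseLo : ∀ s : ℝ, 0 < s → L ⊆ closure (loSet J e s)
  clUp : ∀ s : ℝ, s < 1 → ∀ x ∈ closure (loSet J (e.trans flipIoo) s),
    x ∈ R ∨ ∃ hx : x ∈ J, (((e.trans flipIoo) ⟨x, hx⟩ : ↥(Ioo (0:ℝ) 1)) : ℝ) ≤ s
  denseUp : ∀ s : ℝ, 0 < s → R ⊆ closure (loSet J (e.trans flipIoo) s)

variable {L R : Set X}

def Chart.flip (c : Chart L J R) : Chart R J L where
  openJ := c.openJ
  denseJ := c.denseJ
  union3 := by rw [← c.union3]; ext x; simp only [mem_union, mem_univ]; tauto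
  disjLJ := c.disjRJ
  disjRJ := c.disjLJ
  disjLR := c.disjLR.symm
  closedL := c.closedR
  closedR := c.closedL
  ntL := c.ntR
  ntR := c.ntL
  e := c.e.trans flipIoo
  clLo := c.clUp
  denseLo := c.denseUp
  clUp := by rw [trans_flipIoo_flipIoo]; exact c.clLo
  denseUp := by rw [trans_flipIoo_flipIoo]; exact c.denseLo

def Chart.coord (c : Chart L J R) (x : X) (hx : x ∈ J) : ℝ :=
  ((c.e ⟨x, hx⟩ : ↥(Ioo (0:ℝ) 1)) : ℝ)

lemma Chart.coord_mem (c : Chart L J R) (x : X) (hx : x ∈ J) :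
    c.coord x hx ∈ Ioo (0:ℝ) 1 := (c.e ⟨x, hx⟩).2

lemma Chart.flip_coord (c : Chart L J R) (x : X) (hx : x ∈ J) :
    c.flip.coord x hx = 1 - c.coord x hx := rfl

lemma Chart.J_ne (c : Chart L J R) : J.Nonempty := J_nonempty_of_homeo c.e

lemma Chart.J_pre (c : Chart L J R) : IsPreconnected J := isPreconnected_J_of_homeo c.e

lemma Chart.mem_cases (c : Chart L J R) (x : X) : x ∈ L ∨ x ∈ J ∨ x ∈ R := by
  have hx : x ∈ L ∪ J ∪ R := by rw [c.union3]; trivial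
  rcases hx with (h | h) | h
  · exact Or.inl h
  · exact Or.inr (Or.inl h)
  · exact Or.inr (Or.inr h)

lemma Chart.notL_of_memJ (c : Chart L J R) {x : X} (hx : x ∈ J) : x ∉ L :=
  fun hL => Set.disjoint_left.mp c.disjLJ hL hx

lemma Chart.notR_of_memJ (c : Chart L J R) {x : X} (hx : x ∈ J) : x ∉ R :=
  fun hR => Set.disjoint_left.mp c.disjRJ hR hx

/-- Openness of the left part of the separation. -/
lemma Chart.isOpen_loL [T2Space X] (c : Chart L J R) {s : ℝ} (hs : s ∈ Ioo (0:ℝ) 1) :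
    IsOpen (loSet J c.e s ∪ L) := by
  rw [← isClosed_compl_iff]
  have hcompl : (loSet J c.e s ∪ L)ᶜ =
      (loSet J (c.e.trans flipIoo) (1 - s) ∪ midSet J c.e s s) ∪ R := by
    ext x
    rcases c.mem_cases x with hL | hJ | hR
    · simp only [mem_compl_iff, mem_union]
      constructor
      · intro h; exact absurd (Or.inr hL) h
      · rintro ((h | h) | h)
        · exact absurd (loSet_subset_J h) (fun hJ => c.notL_of_memJ hJ hL)
        · exact absurd (midSet_subset_J h) (fun hJ => c.notL_of_memJ hJ hL)
        · exact (Set.disjoint_left.mp c.disjLR hL h).elim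
    · simp only [mem_compl_iff, mem_union]
      have hnotL : x ∉ L := c.notL_of_memJ hJ
      have hnotR : x ∉ R := c.notR_of_memJ hJ
      rw [loSet_trans_flip]
      constructor
      · intro h
        have h1 : x ∉ loSet J c.e s := fun hh => h (Or.inl hh)
        rw [mem_loSet] at h1
        push_neg at h1
        have h2 := h1 hJ
        left
        rcases lt_or_eq_of_le h2 with hlt | heq
        · left; exact ⟨⟨x, hJ⟩, by simpa using hlt, rfl⟩
        · right; exact mem_midSet.mpr ⟨hJ, le_of_eq heq, le_of_eq heq.symm⟩
      · rintro ((h | h) | h)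
        · rintro (h' | h')
          · obtain ⟨hx1, hx2⟩ := mem_loSet.mp h'
            obtain ⟨j, hj, hje⟩ := h
            have : j = (⟨x, hx1⟩ : ↥J) := Subtype.ext hje
            rw [this] at hj
            simp only [mem_preimage, mem_setOf_eq] at hj
            linarith
          · exact hnotL h'
        · rintro (h' | h')
          · obtain ⟨hx1, hx2⟩ := mem_loSet.mp h'
            obtain ⟨hx1', hx3, hx4⟩ := mem_midSet.mp h
            linarith
          · exact hnotL h'
        · exact absurd h hnotR
    · simp only [mem_compl_iff, mem_union]
      constructor
      · intro h; exact Or.inr hR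
      · intro h
        rintro (h' | h')
        · exact c.notR_of_memJ (loSet_subset_J h') hR
        · exact Set.disjoint_left.mp c.disjLR h' hR
  rw [hcompl]
  rw [← closure_eq_iff_isClosed]
  apply Subset.antisymm _ subset_closure
  have hmid : IsClosed (midSet J c.e s s) := (isCompact_midSet hs.1 hs.2).isClosed
  calc closure ((loSet J (c.e.trans flipIoo) (1 - s) ∪ midSet J c.e s s) ∪ R)
      = closure (loSet J (c.e.trans flipIoo) (1 - s)) ∪ closure (midSet J c.e s s) ∪ closure R := by
        rw [closure_union, closure_union]
    _ ⊆ (loSet J (c.e.trans flipIoo) (1 - s) ∪ midSet J c.e s s) ∪ R := by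
        rw [hmid.closure_eq, c.closedR.closure_eq]
        intro x hx
        rcases hx with (hx | hx) | hx
        · rcases c.clUp (1 - s) (by linarith [hs.1]) x hx with hx' | ⟨hxJ, hxle⟩
          · exact Or.inr hx'
          · left
            have hxle' : 1 - ((c.e ⟨x, hxJ⟩ : ↥(Ioo (0:ℝ) 1)) : ℝ) ≤ 1 - s := by
              have : (((c.e.trans flipIoo) ⟨x, hxJ⟩ : ↥(Ioo (0:ℝ) 1)) : ℝ)
                  = 1 - ((c.e ⟨x, hxJ⟩ : ↥(Ioo (0:ℝ) 1)) : ℝ) := rfl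
              linarith [this ▸ hxle]
            rcases lt_or_eq_of_le (by linarith : s ≤ ((c.e ⟨x, hxJ⟩ : ↥(Ioo (0:ℝ) 1)) : ℝ)) with hlt | heq
            · left
              rw [loSet_trans_flip]
              exact ⟨⟨x, hxJ⟩, by simpa using hlt, rfl⟩
            · right
              exact mem_midSet.mpr ⟨hxJ, le_of_eq heq, le_of_eq heq.symm⟩
        · exact Or.inl (Or.inr hx)
        · exact Or.inr hx


/-- The separation of `X \ {p}` for `p ∈ J`. -/
lemma Chart.sep [T2Space X] (c : Chart L J R) {p : X} (hp : p ∈ J) :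
    IsOpen (loSet J c.e (c.coord p hp) ∪ L) ∧
    IsOpen (loSet J (c.e.trans flipIoo) (1 - c.coord p hp) ∪ R) ∧
    Disjoint (loSet J c.e (c.coord p hp) ∪ L) (loSet J (c.e.trans flipIoo) (1 - c.coord p hp) ∪ R) ∧
    ∀ x : X, x ≠ p →
      x ∈ (loSet J c.e (c.coord p hp) ∪ L) ∪ (loSet J (c.e.trans flipIoo) (1 - c.coord p hp) ∪ R) := by
  have hsp : c.coord p hp ∈ Ioo (0:ℝ) 1 := c.coord_mem p hp
  refine ⟨c.isOpen_loL hsp, ?_, ?_, ?_⟩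
  · have := c.flip.isOpen_loL (s := 1 - c.coord p hp) ⟨by linarith [hsp.2], by linarith [hsp.1]⟩
    exact this
  · rw [Set.disjoint_left]
    rintro x (hx | hx) (hy | hy)
    · obtain ⟨h1, h2⟩ := mem_loSet.mp hx
      rw [loSet_trans_flip] at hy
      obtain ⟨j, hj, hje⟩ := hy
      have : j = (⟨x, h1⟩ : ↥J) := Subtype.ext hje
      rw [this] at hj
      simp only [mem_preimage, mem_setOf_eq] at hj
      linarith
    · exact c.notR_of_memJ (loSet_subset_J hx) hy
    · exact c.notL_of_memJ (loSet_subset_J hy) hx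
    · exact Set.disjoint_left.mp c.disjLR hx hy
  · intro x hxp
    rcases c.mem_cases x with hL | hJ | hR
    · exact Or.inl (Or.inr hL)
    · rcases lt_trichotomy (c.coord x hJ) (c.coord p hp) with hlt | heq | hgt
      · exact Or.inl (Or.inl (mem_loSet.mpr ⟨hJ, hlt⟩))
      · exfalso
        apply hxp
        have h1 : c.e ⟨x, hJ⟩ = c.e ⟨p, hp⟩ := Subtype.ext heq
        have h2 : (⟨x, hJ⟩ : ↥J) = ⟨p, hp⟩ := c.e.injective h1
        exact congrArg Subtype.val h2
      · refine Or.inr (Or.inl ?_)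
        rw [loSet_trans_flip]
        exact ⟨⟨x, hJ⟩, by simp only [mem_preimage, mem_setOf_eq, sub_sub_cancel]; exact hgt, rfl⟩
    · exact Or.inr (Or.inr hR)

/-- Connected sets with a point in `L` and a point in `J` contain everything below. -/
lemma Chart.reach [T2Space X] (c : Chart L J R) {C : Set X} (hC : IsPreconnected C) {a x p : X}
    (haC : a ∈ C) (haL : a ∈ L) (hxC : x ∈ C) (hxJ : x ∈ J) (hp : p ∈ J)
    (hlt : c.coord p hp < c.coord x hxJ) : p ∈ C := by
  by_contra hpC
  obtain ⟨hU, hV, hdisj, hcov⟩ := c.sep hp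
  have hxV : x ∈ loSet J (c.e.trans flipIoo) (1 - c.coord p hp) := by
    rw [loSet_trans_flip]
    refine ⟨⟨x, hxJ⟩, ?_, rfl⟩
    simp only [mem_preimage, mem_setOf_eq]
    have h0 : c.coord p hp = ((c.e ⟨p, hp⟩ : ↥(Ioo (0:ℝ) 1)) : ℝ) := rfl
    have h1 : c.coord x hxJ = ((c.e ⟨x, hxJ⟩ : ↥(Ioo (0:ℝ) 1)) : ℝ) := rfl
    rw [h0, h1] at hlt
    rw [h0]
    linarith
  have h := hC _ _ hU hV
    (fun y hy => hcov y (fun h' => hpC (h' ▸ hy)))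
    ⟨a, haC, Or.inr haL⟩ ⟨x, hxC, Or.inl hxV⟩
  obtain ⟨y, -, hy1, hy2⟩ := h
  exact Set.disjoint_left.mp hdisj hy1 hy2

lemma Chart.spanJ [T2Space X] (c : Chart L J R) {C : Set X} (hC : IsPreconnected C)
    {a b : X} (haC : a ∈ C) (haL : a ∈ L) (hbC : b ∈ C) (hbR : b ∈ R) : J ⊆ C := by
  intro p hp
  by_contra hpC
  obtain ⟨hU, hV, hdisj, hcov⟩ := c.sep hp
  have h := hC _ _ hU hV
    (fun y hy => hcov y (fun h' => hpC (h' ▸ hy)))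
    ⟨a, haC, Or.inr haL⟩ ⟨b, hbC, Or.inr hbR⟩
  obtain ⟨y, -, hy1, hy2⟩ := h
  exact Set.disjoint_left.mp hdisj hy1 hy2

lemma Chart.loSet_coord_subset [T2Space X] (c : Chart L J R) {C : Set X}
    (hC : IsPreconnected C) {a x : X} (haC : a ∈ C) (haL : a ∈ L) (hxC : x ∈ C) (hxJ : x ∈ J) :
    loSet J c.e (c.coord x hxJ) ⊆ C := by
  intro p hp
  obtain ⟨hpJ, hplt⟩ := mem_loSet.mp hp
  exact c.reach hC haC haL hxC hxJ hpJ hplt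

lemma Chart.L_subset_of_closed (c : Chart L J R) {C : Set X} (hCcl : IsClosed C) {s : ℝ}
    (hs : 0 < s) (hlo : loSet J c.e s ⊆ C) : L ⊆ C :=
  fun _ ha => closure_minimal hlo hCcl (c.denseLo s hs ha)


/-- A compact set containing `L` together with a low tail is not locally connected. -/
lemma Chart.not_locallyConnected [CompactSpace X] [TopologicalSpace.MetrizableSpace X]
    (c : Chart L J R) {K : Set X} (hLK : L ⊆ K) {s : ℝ} (hs : s ∈ Ioo (0:ℝ) 1)
    (hloK : loSet J c.e s ⊆ K) : ¬ LocallyConnectedSpace ↥K := by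
  intro hlc
  letI : MetricSpace X := TopologicalSpace.metrizableSpaceMetric X
  obtain ⟨a, haL, b, hbL, hab⟩ := c.ntL
  have hd : 0 < dist a b := dist_pos.mpr hab
  set r := dist a b / 2 with hr
  have hrpos : 0 < r := by positivity
  have hnb : (Subtype.val ⁻¹' Metric.ball a r : Set ↥K) ∈ 𝓝 (⟨a, hLK haL⟩ : ↥K) :=
    continuous_subtype_val.continuousAt.preimage_mem_nhds (Metric.ball_mem_nhds a hrpos)
  obtain ⟨V, hVnhd, hVpre, hVsub⟩ := locallyConnectedSpace_iff_connected_subsets.mp hlc _ _ hnb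
  set A := Subtype.val '' V with hA
  have hApre : IsPreconnected A := hVpre.image _ continuous_subtype_val.continuousOn
  have haA : a ∈ A := ⟨_, mem_of_mem_nhds hVnhd, rfl⟩
  have hAball : A ⊆ Metric.ball a r := by rintro _ ⟨v, hv, rfl⟩; exact hVsub hv
  obtain ⟨W, hWsub, hWo, haW⟩ := mem_nhds_iff.mp hVnhd
  obtain ⟨O, hOopen, hOW⟩ := isOpen_induced_iff.mp hWo
  have haO : a ∈ O := by
    have : (⟨a, hLK haL⟩ : ↥K) ∈ W := haW
    rw [← hOW] at this
    exact this
  obtain ⟨x, hxO, hxlo⟩ : ∃ x, x ∈ O ∧ x ∈ loSet J c.e s := by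
    have hcl := c.denseLo s hs.1 haL
    rw [mem_closure_iff] at hcl
    obtain ⟨y, hy1, hy2⟩ := hcl O hOopen haO
    exact ⟨y, hy1, hy2⟩
  have hxA : x ∈ A := by
    refine ⟨⟨x, hloK hxlo⟩, hWsub ?_, rfl⟩
    rw [← hOW]
    exact hxO
  obtain ⟨hxJ, -⟩ := mem_loSet.mp hxlo
  have hsub : loSet J c.e (c.coord x hxJ) ⊆ A := c.loSet_coord_subset hApre haA haL hxA hxJ
  have hb : b ∈ closure (loSet J c.e (c.coord x hxJ)) := c.denseLo _ (c.coord_mem x hxJ).1 hbL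
  have hbball : b ∈ closure (Metric.ball a r) := closure_mono (hsub.trans hAball) hb
  have hble : b ∈ Metric.closedBall a r := Metric.closure_ball_subset_closedBall hbball
  rw [Metric.mem_closedBall, dist_comm] at hble
  rw [hr] at hble
  linarith

/-- Case analysis for compact connected locally connected subsets of `X`. -/
lemma Chart.conn_cases [CompactSpace X] [TopologicalSpace.MetrizableSpace X]
    (c : Chart L J R) {C : Set X} (hCc : IsCompact C) (hCpre : IsPreconnected C)
    (hlc : LocallyConnectedSpace ↥C) : C ⊆ J ∨ C ⊆ L ∨ C ⊆ R := by
  by_cases hCJ : (C ∩ J).Nonempty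
  · by_cases hCL : (C ∩ L).Nonempty
    · exfalso
      obtain ⟨x, hxC, hxJ⟩ := hCJ
      obtain ⟨a, haC, haL⟩ := hCL
      have hsub := c.loSet_coord_subset hCpre haC haL hxC hxJ
      exact c.not_locallyConnected
        (c.L_subset_of_closed hCc.isClosed (c.coord_mem x hxJ).1 hsub)
        (c.coord_mem x hxJ) hsub hlc
    · by_cases hCR : (C ∩ R).Nonempty
      · exfalso
        obtain ⟨x, hxC, hxJ⟩ := hCJ
        obtain ⟨a, haC, haR⟩ := hCR
        have hsub := c.flip.loSet_coord_subset hCpre haC haR hxC hxJ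
        exact c.flip.not_locallyConnected
          (c.flip.L_subset_of_closed hCc.isClosed (c.flip.coord_mem x hxJ).1 hsub)
          (c.flip.coord_mem x hxJ) hsub hlc
      · left
        intro y hy
        rcases c.mem_cases y with hL | hJ | hR
        · exact absurd ⟨y, hy, hL⟩ hCL
        · exact hJ
        · exact absurd ⟨y, hy, hR⟩ hCR
  · by_cases hCL : (C ∩ L).Nonempty
    · by_cases hCR : (C ∩ R).Nonempty
      · exfalso
        obtain ⟨a, haC, haL⟩ := hCL
        obtain ⟨b, hbC, hbR⟩ := hCR
        obtain ⟨j, hj⟩ := c.J_ne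
        exact hCJ ⟨j, c.spanJ hCpre haC haL hbC hbR hj, hj⟩
      · right; left
        intro y hy
        rcases c.mem_cases y with hL | hJ | hR
        · exact hL
        · exact absurd ⟨y, hy, hJ⟩ hCJ
        · exact absurd ⟨y, hy, hR⟩ hCR
    · right; right
      intro y hy
      rcases c.mem_cases y with hL | hJ | hR
      · exact absurd ⟨y, hy, hL⟩ hCL
      · exact absurd ⟨y, hy, hJ⟩ hCJ
      · exact hR


lemma Chart.coord_tendsto (c : Chart L J R) {u : ℕ → X} {x : X} (hu : ∀ n, u n ∈ J)
    (hx : x ∈ J) (h : Filter.Tendsto u Filter.atTop (𝓝 x)) :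
    Filter.Tendsto (fun n => c.coord (u n) (hu n)) Filter.atTop (𝓝 (c.coord x hx)) := by
  have h1 : Filter.Tendsto (fun n => (⟨u n, hu n⟩ : ↥J)) Filter.atTop (𝓝 ⟨x, hx⟩) :=
    tendsto_subtype_rng.mpr h
  exact ((continuous_subtype_val.comp c.e.continuous).tendsto ⟨x, hx⟩).comp h1

lemma Chart.tendsto_of_coord_tendsto (c : Chart L J R) {u : ℕ → X} {x : X}
    (hu : ∀ n, u n ∈ J) (hx : x ∈ J)
    (h : Filter.Tendsto (fun n => c.coord (u n) (hu n)) Filter.atTop (𝓝 (c.coord x hx))) :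
    Filter.Tendsto u Filter.atTop (𝓝 x) := by
  have h1 : Filter.Tendsto
      (fun n => (⟨c.coord (u n) (hu n), c.coord_mem (u n) (hu n)⟩ : ↥(Ioo (0:ℝ) 1)))
      Filter.atTop (𝓝 ⟨c.coord x hx, c.coord_mem x hx⟩) := tendsto_subtype_rng.mpr h
  have h2 := ((continuous_subtype_val.comp c.e.symm.continuous).tendsto _).comp h1
  have e1 : ∀ n, ((c.e.symm ⟨c.coord (u n) (hu n), c.coord_mem (u n) (hu n)⟩ : ↥J) : X) = u n := by
    intro n
    have h3 : (⟨c.coord (u n) (hu n), c.coord_mem (u n) (hu n)⟩ : ↥(Ioo (0:ℝ) 1))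
        = c.e ⟨u n, hu n⟩ := rfl
    rw [h3, c.e.symm_apply_apply]
  have e2 : ((c.e.symm ⟨c.coord x hx, c.coord_mem x hx⟩ : ↥J) : X) = x := by
    have h3 : (⟨c.coord x hx, c.coord_mem x hx⟩ : ↥(Ioo (0:ℝ) 1)) = c.e ⟨x, hx⟩ := rfl
    rw [h3, c.e.symm_apply_apply]
  have h3 : Filter.Tendsto
      (fun n => ((c.e.symm ⟨c.coord (u n) (hu n), c.coord_mem (u n) (hu n)⟩ : ↥J) : X))
      Filter.atTop (𝓝 (((c.e.symm ⟨c.coord x hx, c.coord_mem x hx⟩ : ↥J)) : X)) := h2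
  rw [e2] at h3
  exact h3.congr e1

/-- If `f` maps a point of `J` into `L`, this persists on a neighbourhood. -/
lemma Chart.openPL [CompactSpace X] [TopologicalSpace.MetrizableSpace X]
    (c : Chart L J R) {f : X → X} (hf : Continuous f) {x : X} (hx : x ∈ J) (hfx : f x ∈ L) :
    ∃ O : Set X, IsOpen O ∧ x ∈ O ∧ ∀ y, y ∈ O → y ∈ J → f y ∈ L := by
  by_contra hcon
  push_neg at hcon
  letI : MetricSpace X := TopologicalSpace.metrizableSpaceMetric X
  obtain ⟨B, hB⟩ := (𝓝 x).exists_antitone_basis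
  have hsel : ∀ n : ℕ, ∃ y, y ∈ interior (B n) ∧ y ∈ J ∧ f y ∉ L := fun n =>
    hcon _ isOpen_interior (mem_interior_iff_mem_nhds.mpr (hB.1.mem_of_mem trivial))
  choose y hy1 hy2 hy3 using hsel
  have hyx : Filter.Tendsto y Filter.atTop (𝓝 x) := hB.tendsto fun n => interior_subset (hy1 n)
  have hfy : Filter.Tendsto (fun n => f (y n)) Filter.atTop (𝓝 (f x)) := (hf.tendsto x).comp hyx
  have hevR : ∀ᶠ n in Filter.atTop, f (y n) ∉ R := by
    have hRc : Rᶜ ∈ 𝓝 (f x) :=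
      c.closedR.isOpen_compl.mem_nhds (fun h => Set.disjoint_left.mp c.disjLR hfx h)
    exact hfy.eventually_mem hRc
  obtain ⟨N, hN⟩ := Filter.eventually_atTop.mp hevR
  set j : ℕ → X := fun n => y (n + N) with hj
  have hjJ : ∀ n, j n ∈ J := fun n => hy2 _
  have hjfJ : ∀ n, f (j n) ∈ J := by
    intro n
    rcases c.mem_cases (f (j n)) with hL | hJ | hR
    · exact absurd hL (hy3 _)
    · exact hJ
    · exact absurd hR (hN (n + N) (Nat.le_add_left N n))
  have hjx : Filter.Tendsto j Filter.atTop (𝓝 x) := hyx.comp (Filter.tendsto_add_atTop_nat N)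
  have hkey : ∀ b ∈ L, b = f x := by
    intro b hb
    set lov : ℕ → ℝ := fun n => min (c.coord (j n) (hjJ n)) (c.coord x hx) with hlov
    set hiv : ℕ → ℝ := fun n => max (c.coord (j n) (hjJ n)) (c.coord x hx) with hhiv
    have hlo0 : ∀ n, 0 < lov n := fun n =>
      lt_min (c.coord_mem _ _).1 (c.coord_mem _ _).1
    have hhi1 : ∀ n, hiv n < 1 := fun n =>
      max_lt (c.coord_mem _ _).2 (c.coord_mem _ _).2
    have harc : ∀ n, ∃ z, ∃ hz : z ∈ J,
        (lov n ≤ c.coord z hz ∧ c.coord z hz ≤ hiv n) ∧ f z = b := by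
      intro n
      have hCc : IsCompact (f '' midSet J c.e (lov n) (hiv n)) :=
        (isCompact_midSet (hlo0 n) (hhi1 n)).image hf
      have hCpre : IsPreconnected (f '' midSet J c.e (lov n) (hiv n)) :=
        (isPreconnected_midSet (hlo0 n) (hhi1 n)).image f hf.continuousOn
      have hxmem : x ∈ midSet J c.e (lov n) (hiv n) :=
        mem_midSet.mpr ⟨hx, min_le_right _ _, le_max_right _ _⟩
      have hjmem : j n ∈ midSet J c.e (lov n) (hiv n) :=
        mem_midSet.mpr ⟨hjJ n, min_le_left _ _, le_max_left _ _⟩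
      have hsub := c.loSet_coord_subset hCpre (mem_image_of_mem f hxmem) hfx
        (mem_image_of_mem f hjmem) (hjfJ n)
      have hLC : L ⊆ f '' midSet J c.e (lov n) (hiv n) :=
        c.L_subset_of_closed hCc.isClosed (c.coord_mem _ (hjfJ n)).1 hsub
      obtain ⟨z, hz, hzb⟩ := hLC hb
      obtain ⟨hzJ, hzc⟩ := mem_midSet.mp hz
      exact ⟨z, hzJ, hzc, hzb⟩
    choose z hzJ hzbounds hzb using harc
    have hcj : Filter.Tendsto (fun n => c.coord (j n) (hjJ n)) Filter.atTop
        (𝓝 (c.coord x hx)) := c.coord_tendsto hjJ hx hjx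
    have hlot : Filter.Tendsto lov Filter.atTop (𝓝 (c.coord x hx)) := by
      simpa [min_self] using hcj.min (tendsto_const_nhds (x := c.coord x hx))
    have hhit : Filter.Tendsto hiv Filter.atTop (𝓝 (c.coord x hx)) := by
      simpa [max_self] using hcj.max (tendsto_const_nhds (x := c.coord x hx))
    have hzt : Filter.Tendsto (fun n => c.coord (z n) (hzJ n)) Filter.atTop
        (𝓝 (c.coord x hx)) :=
      tendsto_of_tendsto_of_tendsto_of_le_of_le hlot hhit
        (fun n => (hzbounds n).1) (fun n => (hzbounds n).2)
    have hzx : Filter.Tendsto z Filter.atTop (𝓝 x) := c.tendsto_of_coord_tendsto hzJ hx hzt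
    have hfz : Filter.Tendsto (fun n => f (z n)) Filter.atTop (𝓝 (f x)) :=
      (hf.tendsto x).comp hzx
    have hbt : Filter.Tendsto (fun _ : ℕ => b) Filter.atTop (𝓝 (f x)) := hfz.congr hzb
    exact (tendsto_nhds_unique hbt tendsto_const_nhds).symm
  obtain ⟨a1, ha1, a2, ha2, ha12⟩ := c.ntL
  exact ha12 ((hkey a1 ha1).trans (hkey a2 ha2).symm)

/-- Trichotomy: under `f`, either `J` maps into `J`, or all of `X` maps into `L`, or into `R`. -/
lemma Chart.trich [CompactSpace X] [TopologicalSpace.MetrizableSpace X]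
    (c : Chart L J R) {f : X → X} (hf : Continuous f) :
    MapsTo f J J ∨ (∀ x, f x ∈ L) ∨ (∀ x, f x ∈ R) := by
  set OL : Set X := ⋃₀ {O | IsOpen O ∧ ∀ y, y ∈ O → y ∈ J → f y ∈ L} with hOL
  set OR : Set X := ⋃₀ {O | IsOpen O ∧ ∀ y, y ∈ O → y ∈ J → f y ∈ R} with hOR
  have hOLopen : IsOpen OL := isOpen_sUnion (fun O hO => hO.1)
  have hORopen : IsOpen OR := isOpen_sUnion (fun O hO => hO.1)
  have hmemOL : ∀ j, j ∈ J → f j ∈ L → j ∈ OL := by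
    intro j hj hfj
    obtain ⟨O, h1, h2, h3⟩ := c.openPL hf hj hfj
    exact ⟨O, ⟨h1, h3⟩, h2⟩
  have hmemOR : ∀ j, j ∈ J → f j ∈ R → j ∈ OR := by
    intro j hj hfj
    obtain ⟨O, h1, h2, h3⟩ := c.flip.openPL hf hj hfj
    exact ⟨O, ⟨h1, h3⟩, h2⟩
  have hOLprop : ∀ y ∈ OL, y ∈ J → f y ∈ L := by
    rintro y ⟨O, hO, hyO⟩ hyJ; exact hO.2 y hyO hyJ
  have hORprop : ∀ y ∈ OR, y ∈ J → f y ∈ R := by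
    rintro y ⟨O, hO, hyO⟩ hyJ; exact hO.2 y hyO hyJ
  have hUJ : IsOpen (f ⁻¹' J) := c.openJ.preimage hf
  by_cases h1 : ∃ j ∈ J, f j ∈ L
  · right; left
    have hall : ∀ jj ∈ J, f jj ∈ L := by
      by_contra hno
      push_neg at hno
      obtain ⟨j2, hj2, hfj2⟩ := hno
      obtain ⟨j1, hj1, hfj1⟩ := h1
      have hj2mem : j2 ∈ OR ∪ f ⁻¹' J := by
        rcases c.mem_cases (f j2) with hL | hJ | hR
        · exact absurd hL hfj2
        · exact Or.inr hJ
        · exact Or.inl (hmemOR j2 hj2 hR)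
      have hcover : J ⊆ OL ∪ (OR ∪ f ⁻¹' J) := by
        intro jj hjj
        rcases c.mem_cases (f jj) with hL | hJ | hR
        · exact Or.inl (hmemOL jj hjj hL)
        · exact Or.inr (Or.inr hJ)
        · exact Or.inr (Or.inl (hmemOR jj hjj hR))
      obtain ⟨w, hwJ, hwOL, hwor⟩ := c.J_pre OL (OR ∪ f ⁻¹' J) hOLopen (hORopen.union hUJ)
        hcover ⟨j1, hj1, hmemOL j1 hj1 hfj1⟩ ⟨j2, hj2, hj2mem⟩
      rcases hwor with hwOR | hwUJ
      · exact Set.disjoint_left.mp c.disjLR (hOLprop w hwOL hwJ) (hORprop w hwOR hwJ)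
      · exact Set.disjoint_left.mp c.disjLJ (hOLprop w hwOL hwJ) hwUJ
    intro x
    have hx : x ∈ closure J := c.denseJ x
    have hsub : f '' J ⊆ L := by rintro _ ⟨jj, hjj, rfl⟩; exact hall jj hjj
    have h3 : f x ∈ closure (f '' J) :=
      image_closure_subset_closure_image hf (mem_image_of_mem f hx)
    have h4 := closure_mono hsub h3
    rwa [c.closedL.closure_eq] at h4
  · by_cases h2 : ∃ j ∈ J, f j ∈ R
    · right; right
      have hall : ∀ jj ∈ J, f jj ∈ R := by
        by_contra hno
        push_neg at hno
        obtain ⟨j2, hj2, hfj2⟩ := hno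
        obtain ⟨j1, hj1, hfj1⟩ := h2
        have hj2mem : j2 ∈ OL ∪ f ⁻¹' J := by
          rcases c.mem_cases (f j2) with hL | hJ | hR
          · exact Or.inl (hmemOL j2 hj2 hL)
          · exact Or.inr hJ
          · exact absurd hR hfj2
        have hcover : J ⊆ OR ∪ (OL ∪ f ⁻¹' J) := by
          intro jj hjj
          rcases c.mem_cases (f jj) with hL | hJ | hR
          · exact Or.inr (Or.inl (hmemOL jj hjj hL))
          · exact Or.inr (Or.inr hJ)
          · exact Or.inl (hmemOR jj hjj hR)
        obtain ⟨w, hwJ, hwOR, hwor⟩ := c.J_pre OR (OL ∪ f ⁻¹' J) hORopen (hOLopen.union hUJ)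
          hcover ⟨j1, hj1, hmemOR j1 hj1 hfj1⟩ ⟨j2, hj2, hj2mem⟩
        rcases hwor with hwOL | hwUJ
        · exact Set.disjoint_left.mp c.disjLR (hOLprop w hwOL hwJ) (hORprop w hwOR hwJ)
        · exact Set.disjoint_left.mp c.disjRJ (hORprop w hwOR hwJ) hwUJ
      intro x
      have hx : x ∈ closure J := c.denseJ x
      have hsub : f '' J ⊆ R := by rintro _ ⟨jj, hjj, rfl⟩; exact hall jj hjj
      have h3 : f x ∈ closure (f '' J) :=
        image_closure_subset_closure_image hf (mem_image_of_mem f hx)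
      have h4 := closure_mono hsub h3
      rwa [c.closedR.closure_eq] at h4
    · left
      intro jj hjj
      rcases c.mem_cases (f jj) with hL | hJ | hR
      · exact absurd ⟨jj, hjj, hL⟩ h1
      · exact hJ
      · exact absurd ⟨jj, hjj, hR⟩ h2


/-! ### Generic lemmas about minimal systems -/

lemma MSetIn_subset {Z M : Set X} (h : M ∈ MSetIn Z) : M ⊆ Z := by
  obtain ⟨M', -, rfl⟩ := h
  rintro x ⟨y, -, rfl⟩
  exact y.2

lemma MSetIn_nonempty {Z M : Set X} (h : M ∈ MSetIn Z) : M.Nonempty := by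
  obtain ⟨M', ⟨-, f, -, hne, -, -⟩, rfl⟩ := h
  exact hne.image _

/-- Realization of a minimal set inside an invariant subspace. -/
lemma realize_subset [T2Space X] {Z M : Set X} {f : X → X} (hf : Continuous f)
    (hMc : IsCompact M) (hmin : MinimalSystemOn f M) (hMZ : M ⊆ Z)
    (hfZ : MapsTo f Z Z) : M ∈ MSetIn Z := by
  obtain ⟨hne, himg, hmm⟩ := hmin
  set g : Z → Z := hfZ.restrict f Z Z with hg
  have hgc : Continuous g := hf.restrict hfZ
  have hval : Subtype.val '' (Subtype.val ⁻¹' M : Set Z) = M := by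
    rw [Subtype.image_preimage_coe]
    exact inter_eq_self_of_subset_right hMZ
  set M' : Set Z := Subtype.val ⁻¹' M with hM'
  have key : ∀ N : Set Z, Subtype.val '' (g '' N) = f '' (Subtype.val '' N) := by
    intro N
    rw [Set.image_image, Set.image_image]
    rfl
  have hM'c : IsCompact M' := Subtype.isCompact_iff.mpr (by rwa [hval])
  refine ⟨M', ⟨hM'c, g, hgc, ⟨?_, ?_, ?_⟩⟩, hval.symm⟩
  · obtain ⟨x, hx⟩ := hne
    exact ⟨⟨x, hMZ hx⟩, hx⟩
  · apply Set.image_injective.mpr Subtype.val_injective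
    rw [key, hval, himg]
  · intro N hNM' hNne hNcl hgN
    have hNc : IsCompact N := hM'c.of_isClosed_subset hNcl hNM'
    have hN0c : IsCompact (Subtype.val '' N) := hNc.image continuous_subtype_val
    have h1 : Subtype.val '' N = M := by
      refine hmm _ ?_ (hNne.image _) hN0c.isClosed ?_
      · rw [← hval]; exact Set.image_mono  hNM'
      · rw [← key]; exact Set.image_mono  hgN
    have h2 : Subtype.val ⁻¹' (Subtype.val '' N) = (M' : Set Z) := by rw [h1]
    rwa [Set.preimage_image_eq N Subtype.val_injective] at h2

/-- The continuous image of a compact locally connected space is locally connected. -/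
lemma locallyConnectedSpace_of_image {Y Z : Type*} [TopologicalSpace Y] [TopologicalSpace Z]
    [CompactSpace Y] [T2Space Z] [LocallyConnectedSpace Y] {f : Y → Z}
    (hf : Continuous f) (hsurj : Function.Surjective f) : LocallyConnectedSpace Z := by
  rw [locallyConnectedSpace_iff_connected_subsets]
  intro z U hU
  have hfib : IsCompact (f ⁻¹' {z}) := (isClosed_singleton.preimage hf).isCompact
  have hthen : ∀ y : Y, y ∈ f ⁻¹' {z} → f ⁻¹' U ∈ 𝓝 y := by
    intro y hy
    apply hf.continuousAt.preimage_mem_nhds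
    rw [show f y = z from hy]
    exact hU
  have hsel : ∀ y : Y, y ∈ f ⁻¹' {z} → ∃ V ∈ 𝓝 y, IsPreconnected V ∧ V ⊆ f ⁻¹' U :=
    fun y hy => locallyConnectedSpace_iff_connected_subsets.mp ‹_› y _ (hthen y hy)
  choose! V hV1 hV2 hV3 using hsel
  obtain ⟨t, ht⟩ := hfib.elim_nhds_subcover' (fun y hy => interior (V y))
    (fun y hy => interior_mem_nhds.mpr (hV1 y hy))
  set W : Set Y := ⋃ y ∈ t, V y.1 with hW
  set W0 : Set Y := ⋃ y ∈ t, interior (V y.1) with hW0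
  have hW0W : W0 ⊆ W := by
    apply Set.iUnion₂_mono
    intro y hy
    exact interior_subset
  have hfibW0 : f ⁻¹' {z} ⊆ W0 := ht
  have hWU : W ⊆ f ⁻¹' U := by
    apply Set.iUnion₂_subset
    intro y hy
    exact hV3 y.1 y.2
  refine ⟨f '' W, ?_, ?_, ?_⟩
  · -- neighbourhood of z
    have hclosed : IsClosed (f '' W0ᶜ) :=
      ((isOpen_iUnion (fun y => isOpen_iUnion (fun _ => isOpen_interior))).isClosed_compl.isCompact.image hf).isClosed
    refine mem_nhds_iff.mpr ⟨(f '' W0ᶜ)ᶜ, ?_, hclosed.isOpen_compl, ?_⟩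
    · intro o ho
      obtain ⟨y, rfl⟩ := hsurj o
      have hy : y ∈ W0 := by
        by_contra hyW
        exact ho (mem_image_of_mem f hyW)
      exact mem_image_of_mem f (hW0W hy)
    · intro hzmem
      obtain ⟨y, hy1, hy2⟩ := hzmem
      exact hy1 (hfibW0 (by rw [mem_preimage, hy2]; rfl))
  · -- preconnected
    have him : f '' W = ⋃₀ ((fun y : ↥(f ⁻¹' {z}) => f '' V y.1) '' ↑t) := by
      rw [sUnion_image, hW, image_iUnion₂]
      ext w
      simp
    rw [him]
    apply isPreconnected_sUnion z
    · rintro S ⟨y, hy, rfl⟩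
      exact ⟨y.1, mem_of_mem_nhds (hV1 y.1 y.2), y.2⟩
    · rintro S ⟨y, hy, rfl⟩
      exact (hV2 y.1 y.2).image f hf.continuousOn
  · calc f '' W ⊆ f '' (f ⁻¹' U) := Set.image_mono  hWU
      _ ⊆ U := Set.image_preimage_subset f U

/-- A directed intersection of compact connected sets is connected. -/
lemma isPreconnected_iInter_of_directed [T2Space X] {ι : Type*} [Nonempty ι] {K : ι → Set X}
    (hdir : Directed (· ⊇ ·) K) (hcomp : ∀ i, IsCompact (K i)) (hcl : ∀ i, IsClosed (K i))
    (hconn : ∀ i, IsPreconnected (K i)) : IsPreconnected (⋂ i, K i) := by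
  set E := ⋂ i, K i with hE
  intro U V hU hV hcov hneU hneV
  by_contra hcon
  rw [Set.not_nonempty_iff_eq_empty] at hcon
  have hEcl : IsClosed E := isClosed_iInter hcl
  have hEK : ∀ i, E ⊆ K i := fun i => iInter_subset _ i
  have hAeq : E ∩ U = E \ V := by
    apply Subset.antisymm
    · rintro x ⟨hxE, hxU⟩
      refine ⟨hxE, fun hxV => ?_⟩
      have : x ∈ E ∩ (U ∩ V) := ⟨hxE, hxU, hxV⟩
      rw [hcon] at this
      exact this
    · rintro x ⟨hxE, hxV⟩
      rcases hcov hxE with h | h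
      · exact ⟨hxE, h⟩
      · exact absurd h hxV
  have hBeq : E ∩ V = E \ U := by
    apply Subset.antisymm
    · rintro x ⟨hxE, hxV⟩
      refine ⟨hxE, fun hxU => ?_⟩
      have : x ∈ E ∩ (U ∩ V) := ⟨hxE, hxU, hxV⟩
      rw [hcon] at this
      exact this
    · rintro x ⟨hxE, hxU⟩
      rcases hcov hxE with h | h
      · exact absurd h hxU
      · exact ⟨hxE, h⟩
  have hA : IsCompact (E ∩ U) := by
    rw [hAeq]
    exact ((hcomp (Classical.arbitrary ι)).of_isClosed_subset (hEcl.sdiff hV)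
      (fun x hx => hEK _ hx.1))
  have hB : IsCompact (E ∩ V) := by
    rw [hBeq]
    exact ((hcomp (Classical.arbitrary ι)).of_isClosed_subset (hEcl.sdiff hU)
      (fun x hx => hEK _ hx.1))
  have hdisj : Disjoint (E ∩ U) (E ∩ V) := by
    rw [Set.disjoint_left]
    rintro x ⟨hxE, hxU⟩ ⟨-, hxV⟩
    have : x ∈ E ∩ (U ∩ V) := ⟨hxE, hxU, hxV⟩
    rw [hcon] at this
    exact this
  obtain ⟨U', V', hU', hV', hAU', hBV', hd⟩ := SeparatedNhds.of_isCompact_isCompact hA hB hdisj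
  have hEUV : E ⊆ U' ∪ V' := by
    intro x hx
    rcases hcov hx with h | h
    · exact Or.inl (hAU' ⟨hx, h⟩)
    · exact Or.inr (hBV' ⟨hx, h⟩)
  have hex : ∃ i, K i ⊆ U' ∪ V' := by
    by_contra hno
    push_neg at hno
    have h2 : (⋂ i, K i ∩ (U' ∪ V')ᶜ).Nonempty := by
      apply IsCompact.nonempty_iInter_of_directed_nonempty_isCompact_isClosed
      · intro i j
        obtain ⟨k, hk1, hk2⟩ := hdir i j
        exact ⟨k, inter_subset_inter_left _ hk1, inter_subset_inter_left _ hk2⟩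
      · intro i
        obtain ⟨x, hx1, hx2⟩ := Set.not_subset.mp (hno i)
        exact ⟨x, hx1, hx2⟩
      · intro i
        exact (hcomp i).inter_right (hU'.union hV').isClosed_compl
      · intro i
        exact (hcl i).inter (hU'.union hV').isClosed_compl
    obtain ⟨x, hx⟩ := h2
    rw [← Set.iInter_inter] at hx
    exact hx.2 (hEUV hx.1)
  obtain ⟨i, hi⟩ := hex
  obtain ⟨a, haE, haU⟩ := hneU
  obtain ⟨b, hbE, hbV⟩ := hneV
  obtain ⟨w, -, hw1, hw2⟩ := hconn i U' V' hU' hV' hi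
    ⟨a, hEK i haE, hAU' ⟨haE, haU⟩⟩ ⟨b, hEK i hbE, hBV' ⟨hbE, hbV⟩⟩
  exact Set.disjoint_left.mp hd hw1 hw2


/-! ### Construction of a chart -/

def tailSet (J : Set X) (e : ↥J ≃ₜ ↥(Ioo (0:ℝ) 1)) : Set X :=
  ⋂ (s : ↥(Ioo (0:ℝ) 1)), closure (loSet J e (s : ℝ))

section TailSet

variable [CompactSpace X] [T2Space X]

instance : Nonempty (↥(Ioo (0:ℝ) 1)) := ⟨⟨1/2, by norm_num⟩⟩

lemma tailSet_directed :
    Directed (· ⊇ ·) (fun s : ↥(Ioo (0:ℝ) 1) => closure (loSet J e (s : ℝ))) := by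
  intro s t
  refine ⟨⟨min (s : ℝ) t, lt_min s.2.1 t.2.1, lt_of_le_of_lt (min_le_left _ _) s.2.2⟩, ?_, ?_⟩
  · exact closure_mono (loSet_mono (min_le_left _ _))
  · exact closure_mono (loSet_mono (min_le_right _ _))

lemma tailSet_nonempty : (tailSet J e).Nonempty := by
  apply IsCompact.nonempty_iInter_of_directed_nonempty_isCompact_isClosed
  · exact tailSet_directed
  · exact fun s => (loSet_nonempty s.2.1).closure
  · exact fun s => isClosed_closure.isCompact
  · exact fun s => isClosed_closure

lemma tailSet_closed : IsClosed (tailSet J e) :=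
  isClosed_iInter (fun _ => isClosed_closure)

lemma tailSet_preconnected : IsPreconnected (tailSet J e) :=
  isPreconnected_iInter_of_directed tailSet_directed
    (fun _ => isClosed_closure.isCompact) (fun _ => isClosed_closure)
    (fun _ => isPreconnected_loSet.closure)

lemma tailSet_disjoint_J {x : X} (hx : x ∈ tailSet J e) : x ∉ J := by
  intro hxJ
  set s : ℝ := ((e ⟨x, hxJ⟩ : ↥(Ioo (0:ℝ) 1)) : ℝ) / 2 with hs
  have hs0 : (0:ℝ) < s := by
    have := (e ⟨x, hxJ⟩).2.1
    positivity
  have hs1 : s < 1 := by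
    have h1 := (e ⟨x, hxJ⟩).2.2
    have h2 := (e ⟨x, hxJ⟩).2.1
    rw [hs]
    linarith
  have hmem := mem_iInter.mp hx ⟨s, hs0, hs1⟩
  have h4 := coord_le_of_mem_closure_loSet hxJ hmem
  have h2 := (e ⟨x, hxJ⟩).2.1
  have h3 : ((e ⟨x, hxJ⟩ : ↥(Ioo (0:ℝ) 1)) : ℝ) ≤ s := h4
  rw [hs] at h3
  linarith

lemma mem_tailSet_of_closure {s : ℝ} (hs : s < 1) {x : X}
    (hx : x ∈ closure (loSet J e s)) (hxJ : x ∉ J) : x ∈ tailSet J e := by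
  rw [tailSet, mem_iInter]
  intro t
  by_cases hts : s ≤ (t : ℝ)
  · exact closure_mono (loSet_mono hts) hx
  push_neg at hts
  have hsplit : loSet J e s ⊆ loSet J e (t : ℝ) ∪ midSet J e (t : ℝ) s := by
    intro w hw
    obtain ⟨hwJ, hwlt⟩ := mem_loSet.mp hw
    rcases lt_or_ge ((e ⟨w, hwJ⟩ : ↥(Ioo (0:ℝ) 1)) : ℝ) (t : ℝ) with h | h
    · exact Or.inl (mem_loSet.mpr ⟨hwJ, h⟩)
    · exact Or.inr (mem_midSet.mpr ⟨hwJ, h, le_of_lt hwlt⟩)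
  have hcl := closure_mono hsplit hx
  rw [closure_union, (isCompact_midSet t.2.1 hs).isClosed.closure_eq] at hcl
  rcases hcl with h | h
  · exact h
  · exact absurd (midSet_subset_J h) hxJ

lemma tailSet_cover {L R : Set X} (hun : L ∪ J ∪ R = univ) (hJd : Dense J)
    (hLJ : Disjoint L J) (hRJ : Disjoint R J) {x : X} (hxLR : x ∈ L ∪ R) :
    x ∈ tailSet J e ∪ tailSet J (e.trans flipIoo) := by
  have hxJ : x ∉ J := by
    rintro hxJ
    rcases hxLR with h | h
    · exact Set.disjoint_left.mp hLJ h hxJ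
    · exact Set.disjoint_left.mp hRJ h hxJ
  by_contra hcon
  rw [mem_union] at hcon
  push_neg at hcon
  obtain ⟨h0, h1⟩ := hcon
  simp only [tailSet, mem_iInter, not_forall] at h0 h1
  obtain ⟨s0, hs0⟩ := h0
  obtain ⟨s1, hs1⟩ := h1
  have hcover : J ⊆ loSet J e (s0 : ℝ) ∪ loSet J (e.trans flipIoo) (s1 : ℝ) ∪
      midSet J e (s0 : ℝ) (1 - (s1 : ℝ)) := by
    intro w hwJ
    rcases lt_or_ge ((e ⟨w, hwJ⟩ : ↥(Ioo (0:ℝ) 1)) : ℝ) (s0 : ℝ) with h | h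
    · exact Or.inl (Or.inl (mem_loSet.mpr ⟨hwJ, h⟩))
    rcases lt_or_ge (1 - (s1 : ℝ)) ((e ⟨w, hwJ⟩ : ↥(Ioo (0:ℝ) 1)) : ℝ) with h' | h'
    · refine Or.inl (Or.inr ?_)
      rw [loSet_trans_flip]
      exact ⟨⟨w, hwJ⟩, by simp only [mem_preimage, mem_setOf_eq]; linarith, rfl⟩
    · exact Or.inr (mem_midSet.mpr ⟨hwJ, h, h'⟩)
  have hx' : x ∈ closure J := hJd x
  have hcl := closure_mono hcover hx'
  rw [closure_union, closure_union,
    (isCompact_midSet s0.2.1 (by linarith [s1.2.1] : 1 - (s1:ℝ) < 1)).isClosed.closure_eq] at hcl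
  rcases hcl with (h | h) | h
  · exact hs0 h
  · exact hs1 h
  · exact hxJ (midSet_subset_J h)

lemma tailSet_subset_side {L R : Set X} (hun : L ∪ J ∪ R = univ)
    (hLJ : Disjoint L J) (hRJ : Disjoint R J) (hLR : Disjoint L R)
    (hLc : IsCompact L) (hRc : IsCompact R) :
    tailSet J e ⊆ L ∨ tailSet J e ⊆ R := by
  have hsub : tailSet J e ⊆ L ∪ R := by
    intro x hx
    have hxJ := tailSet_disjoint_J hx
    have : x ∈ L ∪ J ∪ R := by rw [hun]; trivial
    rcases this with (h | h) | h
    · exact Or.inl h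
    · exact absurd h hxJ
    · exact Or.inr h
  obtain ⟨U, V, hU, hV, hLU, hRV, hd⟩ := SeparatedNhds.of_isCompact_isCompact hLc hRc hLR
  have hcov : tailSet J e ⊆ U ∪ V := by
    intro x hx
    rcases hsub hx with h | h
    · exact Or.inl (hLU h)
    · exact Or.inr (hRV h)
  by_cases hEU : (tailSet J e ∩ U).Nonempty
  · by_cases hEV : (tailSet J e ∩ V).Nonempty
    · obtain ⟨w, -, hw1, hw2⟩ := tailSet_preconnected U V hU hV hcov hEU hEV
      exact absurd hw2 (Set.disjoint_left.mp hd hw1)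
    · left
      intro x hx
      rcases hsub hx with h | h
      · exact h
      · exact absurd ⟨x, hx, hRV h⟩ hEV
  · right
    intro x hx
    rcases hsub hx with h | h
    · exact absurd ⟨x, hx, hLU h⟩ hEU
    · exact h

/-- Build a chart from the identification of the two tails. -/
def mkChart {L R : Set X} (hJo : IsOpen J) (hJd : Dense J) (hun : L ∪ J ∪ R = univ)
    (hLJ : Disjoint L J) (hRJ : Disjoint R J) (hLR : Disjoint L R)
    (hLcl : IsClosed L) (hRcl : IsClosed R) (hLnt : L.Nontrivial) (hRnt : R.Nontrivial)
    (e : ↥J ≃ₜ ↥(Ioo (0:ℝ) 1)) (hE0 : tailSet J e = L)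
    (hE1 : tailSet J (e.trans flipIoo) = R) : Chart L J R where
  openJ := hJo
  denseJ := hJd
  union3 := hun
  disjLJ := hLJ
  disjRJ := hRJ
  disjLR := hLR
  closedL := hLcl
  closedR := hRcl
  ntL := hLnt
  ntR := hRnt
  e := e
  clLo := by
    intro s hs x hx
    by_cases hxJ : x ∈ J
    · exact Or.inr ⟨hxJ, coord_le_of_mem_closure_loSet hxJ hx⟩
    · left
      rw [← hE0]
      exact mem_tailSet_of_closure hs hx hxJ
  denseLo := by
    intro s hs a ha
    have h1 : a ∈ tailSet J e := by rw [hE0]; exact ha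
    have h2 := mem_iInter.mp h1
      ⟨min s (1/2), lt_min hs (by norm_num), lt_of_le_of_lt (min_le_right _ _) (by norm_num)⟩
    exact closure_mono (loSet_mono (min_le_left _ _)) h2
  clUp := by
    intro s hs x hx
    by_cases hxJ : x ∈ J
    · exact Or.inr ⟨hxJ, coord_le_of_mem_closure_loSet hxJ hx⟩
    · left
      rw [← hE1]
      exact mem_tailSet_of_closure hs hx hxJ
  denseUp := by
    intro s hs a ha
    have h1 : a ∈ tailSet J (e.trans flipIoo) := by rw [hE1]; exact ha
    have h2 := mem_iInter.mp h1
      ⟨min s (1/2), lt_min hs (by norm_num), lt_of_le_of_lt (min_le_right _ _) (by norm_num)⟩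
    exact closure_mono (loSet_mono (min_le_left _ _)) h2

lemma exists_chart {L R : Set X} (hJo : IsOpen J) (hJd : Dense J) (hun : L ∪ J ∪ R = univ)
    (hLJ : Disjoint L J) (hRJ : Disjoint R J) (hLR : Disjoint L R)
    (hLc : IsCompact L) (hRc : IsCompact R) (hLnt : L.Nontrivial) (hRnt : R.Nontrivial)
    (e : ↥J ≃ₜ ↥(Ioo (0:ℝ) 1)) :
    Nonempty (Chart L J R) ∨ Nonempty (Chart R J L) := by
  set e' := e.trans flipIoo with he'
  have hcover : ∀ x ∈ L ∪ R, x ∈ tailSet J e ∪ tailSet J e' :=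
    fun x hx => tailSet_cover hun hJd hLJ hRJ hx
  have h0 := tailSet_subset_side (e := e) hun hLJ hRJ hLR hLc hRc
  have h1 := tailSet_subset_side (e := e') hun hLJ hRJ hLR hLc hRc
  have hL0 : ∀ {A B : Set X}, tailSet J e ⊆ A → tailSet J e' ⊆ B →
      Disjoint A B → (A ∪ B = L ∪ R) → tailSet J e = A ∧ tailSet J e' = B := by
    intro A B hA hB hdAB hAB
    constructor
    · refine Subset.antisymm hA ?_
      intro a ha
      have haLR : a ∈ L ∪ R := by rw [← hAB]; exact Or.inl ha
      rcases hcover a haLR with h | h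
      · exact h
      · exact (Set.disjoint_left.mp hdAB ha (hB h)).elim
    · refine Subset.antisymm hB ?_
      intro b hb
      have hbLR : b ∈ L ∪ R := by rw [← hAB]; exact Or.inr hb
      rcases hcover b hbLR with h | h
      · exact (Set.disjoint_left.mp hdAB (hA h) hb).elim
      · exact h
  have hLcl := hLc.isClosed
  have hRcl := hRc.isClosed
  rcases h0 with h0L | h0R
  · rcases h1 with h1L | h1R
    · -- both tails in L : impossible since R nonempty
      exfalso
      obtain ⟨r, hr⟩ := hRnt.nonempty
      rcases hcover r (Or.inr hr) with h | h
      · exact Set.disjoint_left.mp hLR (h0L h) hr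
      · exact Set.disjoint_left.mp hLR (h1L h) hr
    · obtain ⟨hE0, hE1⟩ := hL0 h0L h1R hLR rfl
      exact Or.inl ⟨mkChart hJo hJd hun hLJ hRJ hLR hLcl hRcl hLnt hRnt e hE0 hE1⟩
  · rcases h1 with h1L | h1R
    · obtain ⟨hE0, hE1⟩ := hL0 h0R h1L hLR.symm (union_comm R L)
      refine Or.inr ⟨mkChart hJo hJd ?_ hRJ hLJ hLR.symm hRcl hLcl hRnt hLnt e hE0 hE1⟩
      rw [← hun]
      ext x
      simp only [mem_union]
      tauto
    · exfalso
      obtain ⟨l, hl⟩ := hLnt.nonempty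
      rcases hcover l (Or.inl hl) with h | h
      · exact Set.disjoint_left.mp hLR hl (h0R h)
      · exact Set.disjoint_left.mp hLR hl (h1R h)

end TailSet

lemma peano_image_locallyConnected [T2Space X] {S : Set X} (hSc : IsCompact S)
    (hlc : LocallyConnectedSpace ↥S) {f : X → X} (hf : Continuous f) :
    LocallyConnectedSpace ↥(f '' S) := by
  haveI : CompactSpace ↥S := isCompact_iff_compactSpace.mp hSc
  exact locallyConnectedSpace_of_image
    (f := fun x : ↥S => (⟨f x.1, mem_image_of_mem f x.2⟩ : ↥(f '' S)))
    (Continuous.subtype_mk (hf.comp continuous_subtype_val) _)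
    (by rintro ⟨z, x, hx, rfl⟩; exact ⟨⟨x, hx⟩, rfl⟩)

/-- The main inclusion. -/
lemma mainIncl [CompactSpace X] [TopologicalSpace.MetrizableSpace X]
    {L R : Set X} (c : Chart L J R) (hLc : IsCompact L) (hRc : IsCompact R)
    (hLpre : IsPreconnected L) (hRpre : IsPreconnected R)
    (hlcL : LocallyConnectedSpace ↥L) (hlcR : LocallyConnectedSpace ↥R) :
    MSpace X ⊆ MSetIn J ∪ MSetIn L ∪ MSetIn R ∪ MStarIn L R := by
  rintro M ⟨hMc, f, hf, hmin⟩
  obtain ⟨hMne, hMimg, hMmin⟩ := hmin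
  have hfM : MapsTo f M M := fun x hx => by rw [← hMimg]; exact mem_image_of_mem f hx
  have hcasesL : f '' L ⊆ J ∨ f '' L ⊆ L ∨ f '' L ⊆ R :=
    c.conn_cases (hLc.image hf) (hLpre.image f hf.continuousOn)
      (peano_image_locallyConnected hLc hlcL hf)
  have hcasesR : f '' R ⊆ J ∨ f '' R ⊆ L ∨ f '' R ⊆ R :=
    c.conn_cases (hRc.image hf) (hRpre.image f hf.continuousOn)
      (peano_image_locallyConnected hRc hlcR hf)
  rcases c.trich hf with hJJ | hXL | hXR
  · by_cases hMJ : (M ∩ J).Nonempty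
    · have hMsubJ : M ⊆ J := by
        by_contra hnot
        obtain ⟨w, hwM, hwJ⟩ := Set.not_subset.mp hnot
        have hKcl : IsClosed (M \ J) := by
          rw [Set.diff_eq]
          exact hMc.isClosed.inter c.openJ.isClosed_compl
        have hKne : (M \ J).Nonempty := ⟨w, hwM, hwJ⟩
        have hKnotinv : ¬ (f '' (M \ J) ⊆ M \ J) := by
          intro hKi
          have hKM := hMmin (M \ J) diff_subset hKne hKcl hKi
          obtain ⟨j, hjM, hjJ⟩ := hMJ
          rw [← hKM] at hjM
          exact hjM.2 hjJ
        obtain ⟨a, haK, hfa⟩ : ∃ a ∈ M \ J, f a ∈ J := by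
          by_contra hcc
          push_neg at hcc
          apply hKnotinv
          rintro _ ⟨a, haK, rfl⟩
          exact ⟨hfM haK.1, hcc a haK⟩
        have haLR : a ∈ L ∨ a ∈ R := by
          rcases c.mem_cases a with h | h | h
          · exact Or.inl h
          · exact absurd h haK.2
          · exact Or.inr h
        rcases haLR with haL | haR
        · have hfL : f '' L ⊆ J := by
            rcases hcasesL with h | h | h
            · exact h
            · exact absurd (h (mem_image_of_mem f haL)) (c.notL_of_memJ hfa)
            · exact absurd (h (mem_image_of_mem f haL)) (c.notR_of_memJ hfa)
          by_cases hMR : (M ∩ R).Nonempty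
          · rcases hcasesR with h | h | h
            · apply hwJ
              rw [← hMimg] at hwM
              obtain ⟨m, hm, rfl⟩ := hwM
              rcases c.mem_cases m with hmL | hmJ | hmR
              · exact hfL (mem_image_of_mem f hmL)
              · exact hJJ hmJ
              · exact h (mem_image_of_mem f hmR)
            · obtain ⟨r, hrM, hrR⟩ := hMR
              rw [← hMimg] at hrM
              obtain ⟨m, hm, rfl⟩ := hrM
              rcases c.mem_cases m with hmL | hmJ | hmR
              · exact c.notR_of_memJ (hfL (mem_image_of_mem f hmL)) hrR
              · exact c.notR_of_memJ (hJJ hmJ) hrR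
              · exact Set.disjoint_left.mp c.disjLR (h (mem_image_of_mem f hmR)) hrR
            · have hMReq := hMmin (M ∩ R) inter_subset_left hMR (hMc.isClosed.inter c.closedR)
                (by rintro _ ⟨m, ⟨hmM, hmR⟩, rfl⟩; exact ⟨hfM hmM, h (mem_image_of_mem f hmR)⟩)
              obtain ⟨j, hjM, hjJ⟩ := hMJ
              rw [← hMReq] at hjM
              exact c.notR_of_memJ hjJ hjM.2
          · apply hwJ
            rw [← hMimg] at hwM
            obtain ⟨m, hm, rfl⟩ := hwM
            rcases c.mem_cases m with hmL | hmJ | hmR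
            · exact hfL (mem_image_of_mem f hmL)
            · exact hJJ hmJ
            · exact absurd ⟨m, hm, hmR⟩ hMR
        · have hfR : f '' R ⊆ J := by
            rcases hcasesR with h | h | h
            · exact h
            · exact absurd (h (mem_image_of_mem f haR)) (c.notL_of_memJ hfa)
            · exact absurd (h (mem_image_of_mem f haR)) (c.notR_of_memJ hfa)
          by_cases hML : (M ∩ L).Nonempty
          · rcases hcasesL with h | h | h
            · apply hwJ
              rw [← hMimg] at hwM
              obtain ⟨m, hm, rfl⟩ := hwM
              rcases c.mem_cases m with hmL | hmJ | hmR
              · exact h (mem_image_of_mem f hmL)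
              · exact hJJ hmJ
              · exact hfR (mem_image_of_mem f hmR)
            · have hMLeq := hMmin (M ∩ L) inter_subset_left hML (hMc.isClosed.inter c.closedL)
                (by rintro _ ⟨m, ⟨hmM, hmL⟩, rfl⟩; exact ⟨hfM hmM, h (mem_image_of_mem f hmL)⟩)
              obtain ⟨j, hjM, hjJ⟩ := hMJ
              rw [← hMLeq] at hjM
              exact c.notL_of_memJ hjJ hjM.2
            · obtain ⟨l, hlM, hlL⟩ := hML
              rw [← hMimg] at hlM
              obtain ⟨m, hm, rfl⟩ := hlM
              rcases c.mem_cases m with hmL | hmJ | hmR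
              · exact Set.disjoint_left.mp c.disjLR hlL (h (mem_image_of_mem f hmL))
              · exact c.notL_of_memJ (hJJ hmJ) hlL
              · exact c.notL_of_memJ (hfR (mem_image_of_mem f hmR)) hlL
          · apply hwJ
            rw [← hMimg] at hwM
            obtain ⟨m, hm, rfl⟩ := hwM
            rcases c.mem_cases m with hmL | hmJ | hmR
            · exact absurd ⟨m, hm, hmL⟩ hML
            · exact hJJ hmJ
            · exact hfR (mem_image_of_mem f hmR)
      exact Or.inl (Or.inl (Or.inl (realize_subset hf hMc ⟨hMne, hMimg, hMmin⟩ hMsubJ hJJ)))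
    · have hMLR : M ⊆ L ∪ R := by
        intro m hm
        rcases c.mem_cases m with h | h | h
        · exact Or.inl h
        · exact absurd ⟨m, hm, h⟩ hMJ
        · exact Or.inr h
      by_cases hML : (M ∩ L).Nonempty
      · by_cases hMR : (M ∩ R).Nonempty
        · have hfLR : f '' L ⊆ R := by
            rcases hcasesL with h | h | h
            · exfalso
              obtain ⟨a, haM, haL⟩ := hML
              exact hMJ ⟨f a, hfM haM, h (mem_image_of_mem f haL)⟩
            · exfalso
              have hMLeq := hMmin (M ∩ L) inter_subset_left hML (hMc.isClosed.inter c.closedL)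
                (by rintro _ ⟨m, ⟨hmM, hmL⟩, rfl⟩; exact ⟨hfM hmM, h (mem_image_of_mem f hmL)⟩)
              obtain ⟨r, hrM, hrR⟩ := hMR
              rw [← hMLeq] at hrM
              exact Set.disjoint_left.mp c.disjLR hrM.2 hrR
            · exact h
          have hfRL : f '' R ⊆ L := by
            rcases hcasesR with h | h | h
            · exfalso
              obtain ⟨a, haM, haR⟩ := hMR
              exact hMJ ⟨f a, hfM haM, h (mem_image_of_mem f haR)⟩
            · exact h
            · exfalso
              have hMReq := hMmin (M ∩ R) inter_subset_left hMR (hMc.isClosed.inter c.closedR)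
                (by rintro _ ⟨m, ⟨hmM, hmR⟩, rfl⟩; exact ⟨hfM hmM, h (mem_image_of_mem f hmR)⟩)
              obtain ⟨l, hlM, hlL⟩ := hML
              rw [← hMReq] at hlM
              exact Set.disjoint_left.mp c.disjLR hlL hlM.2
          have hmapsLR : MapsTo f (L ∪ R) (L ∪ R) := by
            rintro x (hx | hx)
            · exact Or.inr (hfLR (mem_image_of_mem f hx))
            · exact Or.inl (hfRL (mem_image_of_mem f hx))
          refine Or.inr ⟨realize_subset hf hMc ⟨hMne, hMimg, hMmin⟩ hMLR hmapsLR, ?_⟩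
          have hsurj1 : Function.Surjective
              (fun x : ↥(M ∩ L) =>
                (⟨f x.1, hfM x.2.1, hfLR (mem_image_of_mem f x.2.2)⟩ : ↥(M ∩ R))) := by
            rintro ⟨y, hyM, hyR⟩
            have hyM' := hyM
            rw [← hMimg] at hyM'
            obtain ⟨m, hm, hfm⟩ := hyM'
            rcases hMLR hm with hmL | hmR
            · exact ⟨⟨m, hm, hmL⟩, Subtype.ext hfm⟩
            · exfalso
              have hfmL : f m ∈ L := hfRL (mem_image_of_mem f hmR)
              rw [hfm] at hfmL
              exact Set.disjoint_left.mp c.disjLR hfmL hyR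
          have hsurj2 : Function.Surjective
              (fun x : ↥(M ∩ R) =>
                (⟨f x.1, hfM x.2.1, hfRL (mem_image_of_mem f x.2.2)⟩ : ↥(M ∩ L))) := by
            rintro ⟨y, hyM, hyL⟩
            have hyM' := hyM
            rw [← hMimg] at hyM'
            obtain ⟨m, hm, hfm⟩ := hyM'
            rcases hMLR hm with hmL | hmR
            · exfalso
              have hfmR : f m ∈ R := hfLR (mem_image_of_mem f hmL)
              rw [hfm] at hfmR
              exact Set.disjoint_left.mp c.disjLR hyL hfmR
            · exact ⟨⟨m, hm, hmR⟩, Subtype.ext hfm⟩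
          exact le_antisymm (Cardinal.mk_le_of_surjective hsurj2)
            (Cardinal.mk_le_of_surjective hsurj1)
        · have hML' : M ⊆ L := fun m hm =>
            (hMLR hm).resolve_right (fun hR => hMR ⟨m, hm, hR⟩)
          have hfLL : MapsTo f L L := by
            rcases hcasesL with h | h | h
            · exfalso
              obtain ⟨a, haM⟩ := hMne
              exact hMJ ⟨f a, hfM haM, h (mem_image_of_mem f (hML' haM))⟩
            · exact fun x hx => h (mem_image_of_mem f hx)
            · exfalso
              obtain ⟨a, haM⟩ := hMne
              exact Set.disjoint_left.mp c.disjLR (hML' (hfM haM))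
                (h (mem_image_of_mem f (hML' haM)))
          exact Or.inl (Or.inl (Or.inr
            (realize_subset hf hMc ⟨hMne, hMimg, hMmin⟩ hML' hfLL)))
      · have hMR' : M ⊆ R := by
          intro m hm
          rcases hMLR hm with h | h
          · exact absurd ⟨m, hm, h⟩ hML
          · exact h
        have hfRR : MapsTo f R R := by
          rcases hcasesR with h | h | h
          · exfalso
            obtain ⟨a, haM⟩ := hMne
            exact hMJ ⟨f a, hfM haM, h (mem_image_of_mem f (hMR' haM))⟩
          · exfalso
            obtain ⟨a, haM⟩ := hMne
            exact Set.disjoint_left.mp c.disjLR (h (mem_image_of_mem f (hMR' haM)))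
              (hMR' (hfM haM))
          · exact fun x hx => h (mem_image_of_mem f hx)
        exact Or.inl (Or.inr (realize_subset hf hMc ⟨hMne, hMimg, hMmin⟩ hMR' hfRR))
  · have hML : M ⊆ L := by
      intro m hm
      rw [← hMimg] at hm
      obtain ⟨y, -, rfl⟩ := hm
      exact hXL y
    exact Or.inl (Or.inl (Or.inr
      (realize_subset hf hMc ⟨hMne, hMimg, hMmin⟩ hML (fun x _ => hXL x))))
  · have hMR : M ⊆ R := by
      intro m hm
      rw [← hMimg] at hm
      obtain ⟨y, -, rfl⟩ := hm
      exact hXR y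
    exact Or.inl (Or.inr (realize_subset hf hMc ⟨hMne, hMimg, hMmin⟩ hMR (fun x _ => hXR x)))


/-! ### Disjointness lemmas -/

lemma disjoint_MSetIn {Z W : Set X} (h : Disjoint Z W) : Disjoint (MSetIn Z) (MSetIn W) := by
  rw [Set.disjoint_left]
  intro M h1 h2
  obtain ⟨x, hx⟩ := MSetIn_nonempty h1
  exact Set.disjoint_left.mp h (MSetIn_subset h1 hx) (MSetIn_subset h2 hx)

lemma disjoint_MSetIn_MStar {Z L R : Set X} (h : Disjoint Z (L ∪ R)) :
    Disjoint (MSetIn Z) (MStarIn L R) := by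
  rw [Set.disjoint_left]
  intro M h1 h2
  obtain ⟨x, hx⟩ := MSetIn_nonempty h1
  exact Set.disjoint_left.mp h (MSetIn_subset h1 hx) (MSetIn_subset h2.1 hx)

lemma disjoint_MSetInL_MStar {L R : Set X} (hLR : Disjoint L R) :
    Disjoint (MSetIn L) (MStarIn L R) := by
  rw [Set.disjoint_left]
  rintro M h1 ⟨-, hcard⟩
  have hML : M ⊆ L := MSetIn_subset h1
  have hMR : M ∩ R = ∅ := by
    rw [eq_empty_iff_forall_notMem]
    rintro x ⟨hxM, hxR⟩
    exact Set.disjoint_left.mp hLR (hML hxM) hxR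
  have hML' : M ∩ L = M := inter_eq_left.mpr hML
  rw [hML', hMR] at hcard
  have hM0 : Cardinal.mk (↥M) = 0 := by
    rw [hcard]
    exact Cardinal.mk_emptyCollection X
  have hMe : M = ∅ := Set.isEmpty_coe_sort.mp (Cardinal.mk_eq_zero_iff.mp hM0)
  obtain ⟨x, hx⟩ := MSetIn_nonempty h1
  rw [hMe] at hx
  exact hx

lemma disjoint_MSetInR_MStar {L R : Set X} (hLR : Disjoint L R) :
    Disjoint (MSetIn R) (MStarIn L R) := by
  rw [Set.disjoint_left]
  rintro M h1 ⟨-, hcard⟩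
  have hMR : M ⊆ R := MSetIn_subset h1
  have hML : M ∩ L = ∅ := by
    rw [eq_empty_iff_forall_notMem]
    rintro x ⟨hxM, hxL⟩
    exact Set.disjoint_left.mp hLR hxL (hMR hxM)
  have hMR' : M ∩ R = M := inter_eq_left.mpr hMR
  rw [hMR', hML] at hcard
  have hM0 : Cardinal.mk (↥M) = 0 := by
    rw [← hcard]
    exact Cardinal.mk_emptyCollection X
  have hMe : M = ∅ := Set.isEmpty_coe_sort.mp (Cardinal.mk_eq_zero_iff.mp hM0)
  obtain ⟨x, hx⟩ := MSetIn_nonempty h1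
  rw [hMe] at hx
  exact hx

lemma MStarIn_swap {L R M : Set X} (h : M ∈ MStarIn R L) : M ∈ MStarIn L R := by
  obtain ⟨h1, h2⟩ := h
  refine ⟨?_, h2.symm⟩
  rw [union_comm]
  exact h1

end

end Stmt3Aux

/-- If `X = L ∪ J ∪ R ∈ 𝒞`, `L, R` nondegenerate, `L ∩ R = ∅`, then
`𝓜(X) ⊆ 𝓜(J) ∪ 𝓜(L) ∪ 𝓜(R) ∪ 𝓜*(L;R)` and the four systems are pairwise disjoint. -/
theorem stmt3 {X : Type*} [TopologicalSpace X] [CompactSpace X] [ConnectedSpace X]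
    [TopologicalSpace.MetrizableSpace X] {L J R : Set X} (hC : ClassC L J R)
    (hL : L.Nontrivial) (hR : R.Nontrivial) (hLR : Disjoint L R) :
    MSpace X ⊆ MSetIn J ∪ MSetIn L ∪ MSetIn R ∪ MStarIn L R ∧
    Disjoint (MSetIn J) (MSetIn L) ∧
    Disjoint (MSetIn J) (MSetIn R) ∧
    Disjoint (MSetIn J) (MStarIn L R) ∧
    Disjoint (MSetIn L) (MSetIn R) ∧
    Disjoint (MSetIn L) (MStarIn L R) ∧
    Disjoint (MSetIn R) (MStarIn L R) := by
  obtain ⟨e₀⟩ := hC.freeJ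
  constructor
  · -- the inclusion
    rcases Stmt3Aux.exists_chart hC.openJ hC.denseJ hC.union_eq hC.disjLJ hC.disjRJ hLR
        hC.compactL hC.compactR hL hR e₀ with hne | hne
    · obtain ⟨c⟩ := hne
      exact Stmt3Aux.mainIncl c hC.compactL hC.compactR hC.connL.isPreconnected
        hC.connR.isPreconnected hC.locConnL hC.locConnR
    · obtain ⟨c⟩ := hne
      intro M hM
      rcases Stmt3Aux.mainIncl c hC.compactR hC.compactL hC.connR.isPreconnected
          hC.connL.isPreconnected hC.locConnR hC.locConnL hM with ((hJ | hRm) | hLm) | hstar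
      · exact Or.inl (Or.inl (Or.inl hJ))
      · exact Or.inl (Or.inr hRm)
      · exact Or.inl (Or.inl (Or.inr hLm))
      · exact Or.inr (Stmt3Aux.MStarIn_swap hstar)
  refine ⟨?_, ?_, ?_, ?_, ?_, ?_⟩
  · exact Stmt3Aux.disjoint_MSetIn hC.disjLJ.symm
  · exact Stmt3Aux.disjoint_MSetIn hC.disjRJ.symm
  · exact Stmt3Aux.disjoint_MSetIn_MStar (Disjoint.union_right hC.disjLJ.symm hC.disjRJ.symm)
  · exact Stmt3Aux.disjoint_MSetIn hLR
  · exact Stmt3Aux.disjoint_MSetInL_MStar hLR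
  · exact Stmt3Aux.disjoint_MSetInR_MStar hLR
end

section
/- Let Y be a line or a ray, i.e., a topological space homeomorphic to ℝ or to [0,∞). Then 𝓜(Y) is exactly the system of all subsets M ⊆ Y such that M is a nonempty finite set or a Cantor set. -/
open Set Topology

section MinGeneral
variable {Y : Type*} [TopologicalSpace Y] [T2Space Y] {f : Y → Y} {M : Set Y}

omit [T2Space Y] in
lemma maps_to_of_min (h : MinimalSystemOn f M) : MapsTo f M M := by
  intro x hx
  have := h.2.1
  exact this ▸ mem_image_of_mem f hx

omit [T2Space Y] in
lemma iter_mem_of_min (h : MinimalSystemOn f M) {x : Y} (hx : x ∈ M) (n : ℕ) :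
    f^[n] x ∈ M := by
  induction n with
  | zero => simpa
  | succ n ih => rw [Function.iterate_succ_apply']; exact maps_to_of_min h ih

lemma orbit_closure_eq (hM : IsCompact M) (hf : Continuous f) (h : MinimalSystemOn f M)
    {x : Y} (hx : x ∈ M) : closure (range fun n => f^[n] x) = M := by
  have hsub : range (fun n => f^[n] x) ⊆ M := by
    rintro _ ⟨n, rfl⟩; exact iter_mem_of_min h hx n
  apply h.2.2
  · exact closure_minimal hsub hM.isClosed
  · exact ⟨x, subset_closure ⟨0, rfl⟩⟩
  · exact isClosed_closure
  · refine (image_closure_subset_closure_image hf).trans (closure_mono ?_)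
    rintro _ ⟨_, ⟨n, rfl⟩, rfl⟩
    exact ⟨n + 1, by simp [Function.iterate_succ_apply']⟩

lemma finite_of_periodic (hM : IsCompact M) (h : MinimalSystemOn f M)
    {x : Y} (hx : x ∈ M) {n : ℕ} (hn : 0 < n) (hp : f^[n] x = x) : M.Finite := by
  have key : ((fun k => f^[k] x) '' (Iio n)) = M := by
    apply h.2.2
    · rintro _ ⟨k, _, rfl⟩; exact iter_mem_of_min h hx k
    · exact ⟨x, 0, hn, rfl⟩
    · exact (((finite_Iio n).image _)).isClosed
    · rintro _ ⟨_, ⟨k, hk, rfl⟩, rfl⟩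
      rcases eq_or_lt_of_le (Nat.succ_le_of_lt hk) with he | hlt
      · refine ⟨0, hn, ?_⟩
        simp only [Function.iterate_zero_apply]
        rw [← Function.iterate_succ_apply' f k x, he, hp]
      · exact ⟨k + 1, hlt, by simp [Function.iterate_succ_apply']⟩
  rw [← key]
  exact (finite_Iio n).image _

lemma no_isolated_of_infinite (hM : IsCompact M) (hf : Continuous f)
    (h : MinimalSystemOn f M) (hinf : ¬ M.Finite) : NoIsolatedPoints ↥M := by
  rintro ⟨x, hx⟩ hop
  rw [isOpen_induced_iff] at hop
  obtain ⟨U, hU, hUx⟩ := hop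
  have hxU : x ∈ U := by
    have : (⟨x, hx⟩ : ↥M) ∈ (Subtype.val ⁻¹' U : Set ↥M) := by rw [hUx]; rfl
    exact this
  have hsingle : ∀ y ∈ M, y ∈ U → y = x := by
    intro y hy hyU
    have : (⟨y, hy⟩ : ↥M) ∈ (Subtype.val ⁻¹' U : Set ↥M) := hyU
    rw [hUx] at this
    exact congrArg Subtype.val this
  -- x is in the closure of the orbit of f x
  have hcl : x ∈ closure (range fun n => f^[n] (f x)) := by
    rw [orbit_closure_eq hM hf h (maps_to_of_min h hx)]; exact hx
  rw [mem_closure_iff] at hcl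
  obtain ⟨y, hyU, n, rfl⟩ := hcl U hU hxU
  have hmem : f^[n] (f x) ∈ M := iter_mem_of_min h (maps_to_of_min h hx) n
  have := hsingle _ hmem hyU
  rw [← Function.iterate_succ_apply f n x] at this
  exact hinf (finite_of_periodic hM h hx (Nat.succ_pos n) this)

end MinGeneral


lemma td_of_infinite {f : ℝ → ℝ} {M : Set ℝ} (hM : IsCompact M) (hf : Continuous f)
    (h : MinimalSystemOn f M) (hinf : ¬ M.Finite) : IsTotallyDisconnected M := by
  intro S hSM hS
  by_contra hns
  obtain ⟨a, haS, b, hbS, hab'⟩ := Set.not_subsingleton_iff.mp hns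
  wlog hab : a < b generalizing a b
  · exact this b hbS a haS (Ne.symm hab') (lt_of_le_of_ne (not_lt.mp hab) (Ne.symm hab'))
  have haM : a ∈ M := hSM haS
  set C := connectedComponentIn M a with hC
  have hCM : C ⊆ M := connectedComponentIn_subset M a
  have haC : a ∈ C := mem_connectedComponentIn haM
  have hSC : S ⊆ C := hS.subset_connectedComponentIn haS hSM
  have hIccS : Icc a b ⊆ S := hS.ordConnected.out haS hbS
  have hCclosed : IsClosed C := by
    rw [hC, connectedComponentIn_eq_image haM]
    exact (hM.isClosed.isClosedEmbedding_subtypeVal).isClosedMap _ isClosed_connectedComponent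
  have hCcomp : IsCompact C := hM.of_isClosed_subset hCclosed hCM
  have hCne : C.Nonempty := ⟨a, haC⟩
  have hCconn : IsPreconnected C := isPreconnected_connectedComponentIn
  set c := sInf C with hc
  set d := sSup C with hd
  have hcC : c ∈ C := hCcomp.sInf_mem hCne
  have hdC : d ∈ C := hCcomp.sSup_mem hCne
  have hCIcc : C = Icc c d := by
    apply Subset.antisymm
    · intro x hx
      exact ⟨csInf_le hCcomp.bddBelow hx, le_csSup hCcomp.bddAbove hx⟩
    · exact hCconn.ordConnected.out hcC hdC
  -- find a return to Ioo a b
  have hzM : ((a + b) / 2) ∈ M := hSM (hIccS ⟨by linarith, by linarith⟩)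
  have hz : ((a + b) / 2) ∈ closure (range fun n => f^[n] (f a)) := by
    rw [orbit_closure_eq hM hf h (maps_to_of_min h haM)]; exact hzM
  rw [mem_closure_iff] at hz
  obtain ⟨y, hy, n, rfl⟩ := hz (Ioo a b) isOpen_Ioo ⟨by linarith, by linarith⟩
  set m := n + 1 with hm
  have hwC : f^[m] a ∈ C := by
    have : f^[m] a ∈ Ioo a b := by
      rwa [hm, Function.iterate_succ_apply]
    exact hSC (hIccS (Ioo_subset_Icc_self this))
  have himg : f^[m] '' C ⊆ C := by
    have hpre : IsPreconnected (f^[m] '' C) :=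
      hCconn.image _ (hf.iterate m).continuousOn
    have hsubM : f^[m] '' C ⊆ M := by
      rintro _ ⟨x, hx, rfl⟩; exact iter_mem_of_min h (hCM hx) m
    have : f^[m] '' C ⊆ connectedComponentIn M (f^[m] a) :=
      hpre.subset_connectedComponentIn (mem_image_of_mem _ haC) hsubM
    first
    | exact this.trans (le_of_eq (connectedComponentIn_eq hwC))
    | exact this.trans (le_of_eq (connectedComponentIn_eq hwC).symm)
  -- fixed point of f^[m] in C
  have hcd : c ≤ d := (hCIcc ▸ haC).1.trans (hCIcc ▸ haC).2
  have hφ : ContinuousOn (fun x => f^[m] x - x) (Icc c d) :=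
    ((hf.iterate m).sub continuous_id).continuousOn
  have h0 : (0:ℝ) ∈ Icc (f^[m] d - d) (f^[m] c - c) := by
    constructor
    · have : f^[m] d ∈ Icc c d := hCIcc ▸ himg (mem_image_of_mem _ hdC)
      linarith [this.2]
    · have : f^[m] c ∈ Icc c d := hCIcc ▸ himg (mem_image_of_mem _ hcC)
      linarith [this.1]
  obtain ⟨p, hp, hp0⟩ := intermediate_value_Icc' hcd hφ h0
  have hpM : p ∈ M := hCM (hCIcc ▸ hp)
  have hper : f^[m] p = p := by linarith [sub_eq_zero.mp hp0]
  exact hinf (finite_of_periodic hM h hpM (Nat.succ_pos n) hper)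


open Fin.NatCast in
lemma finite_construction {M : Set ℝ} (hfin : M.Finite) (hne : M.Nonempty) :
    ∃ F : ℝ → ℝ, Continuous F ∧ MinimalSystemOn F M ∧
      ∀ x, F x ∈ Icc (sInf M) (sSup M) := by
  classical
  set s := hfin.toFinset with hs
  set n := s.card with hn
  have hn0 : 0 < n := Finset.card_pos.mpr (by simpa [hs] using hne)
  haveI : NeZero n := ⟨hn0.ne'⟩
  set e : Fin n → ℝ := fun i => (s.orderIsoOfFin rfl i : ℝ) with he
  have hrange : range e = M := by
    ext x
    constructor
    · rintro ⟨i, rfl⟩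
      exact hfin.mem_toFinset.mp (s.orderIsoOfFin rfl i).2
    · intro hx
      have hx' : x ∈ s := by simpa [hs] using hx
      exact ⟨(s.orderIsoOfFin rfl).symm ⟨x, hx'⟩,
        congrArg Subtype.val ((s.orderIsoOfFin rfl).apply_symm_apply ⟨x, hx'⟩)⟩
  have hinj : Function.Injective e := fun i j hij => by
    have := (s.orderIsoOfFin rfl).injective (Subtype.ext hij)
    exact this
  have heM : ∀ i, e i ∈ M := fun i => hrange ▸ ⟨i, rfl⟩
  set lo := sInf M with hlo
  set hi := sSup M with hhi
  have hmem : ∀ x ∈ M, x ∈ Icc lo hi := fun x hx =>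
    ⟨csInf_le hfin.bddBelow hx, le_csSup hfin.bddAbove hx⟩
  have hlohi : lo ≤ hi := by
    obtain ⟨x, hx⟩ := hne
    exact (hmem x hx).1.trans (hmem x hx).2
  set P := Lagrange.interpolate (Finset.univ : Finset (Fin n)) e (fun i => e (i + 1)) with hP
  set F : ℝ → ℝ := fun x => max lo (min hi (P.eval x)) with hF
  have hFcont : Continuous F := by
    exact continuous_const.max (continuous_const.min P.continuous)
  have hFnode : ∀ i, F (e i) = e (i + 1) := by
    intro i
    have : P.eval (e i) = e (i + 1) :=
      Lagrange.eval_interpolate_at_node _ (hinj.injOn) (Finset.mem_univ i)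
    rw [hF]
    simp only [this]
    rw [min_eq_right (hmem _ (heM (i+1))).2, max_eq_right (hmem _ (heM (i+1))).1]
  have hFIcc : ∀ x, F x ∈ Icc lo hi := fun x =>
    ⟨le_max_left _ _, max_le hlohi (min_le_left _ _)⟩
  have hiter : ∀ (N : Set ℝ), F '' N ⊆ N → ∀ i : Fin n, e i ∈ N → ∀ k : ℕ, e (i + k) ∈ N := by
    intro N hinv i hi k
    induction k with
    | zero => simpa using hi
    | succ k ih =>
      have : ((k+1 : ℕ) : Fin n) = (k : Fin n) + 1 := by push_cast; ring
      rw [this, ← add_assoc, ← hFnode]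
      exact hinv (mem_image_of_mem F ih)
  refine ⟨F, hFcont, ⟨hne, ?_, ?_⟩, hFIcc⟩
  · apply Subset.antisymm
    · rintro _ ⟨x, hx, rfl⟩
      obtain ⟨i, rfl⟩ := hrange.symm ▸ hx
      rw [hFnode i]; exact heM _
    · intro y hy
      obtain ⟨j, rfl⟩ := hrange.symm ▸ hy
      refine ⟨e (j - 1), heM _, ?_⟩
      rw [hFnode]
      congr 1
      exact sub_add_cancel j 1
  · intro N hNM hNne hNcl hNinv
    obtain ⟨x, hxN⟩ := hNne
    obtain ⟨i, rfl⟩ := hrange.symm ▸ (hNM hxN)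
    refine Subset.antisymm hNM ?_
    intro y hy
    obtain ⟨j, rfl⟩ := hrange.symm ▸ hy
    have := hiter N hNinv i hxN (j - i).val
    rwa [Fin.cast_val_eq_self, add_comm, sub_add_cancel] at this


section Cantor
variable {K : Set ℝ}

/-- cut point between two points of a totally disconnected set -/
lemma exists_cut (hKtd : IsTotallyDisconnected K) {x y : ℝ} (hx : x ∈ K) (hy : y ∈ K)
    (hxy : x < y) : ∃ q, x < q ∧ q < y ∧ q ∉ K := by
  by_contra hq
  push_neg at hq
  have hIcc : Icc x y ⊆ K := by
    intro z hz
    rcases eq_or_lt_of_le hz.1 with rfl | h1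
    · exact hx
    rcases eq_or_lt_of_le hz.2 with rfl | h2
    · exact hy
    exact hq z h1 h2
  have := hKtd (Icc x y) hIcc isPreconnected_Icc
  exact absurd (this (left_mem_Icc.mpr hxy.le) (right_mem_Icc.mpr hxy.le)) hxy.ne

/-- an open set meeting K meets it in at least two points -/
lemma exists_two (hKiso : NoIsolatedPoints ↥K) {V : Set ℝ} (hV : IsOpen V) {z : ℝ}
    (hz : z ∈ K ∩ V) : ∃ w ∈ K ∩ V, w ≠ z := by
  by_contra hw
  push_neg at hw
  apply hKiso ⟨z, hz.1⟩
  rw [isOpen_induced_iff]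
  refine ⟨V, hV, ?_⟩
  ext ⟨w, hwK⟩
  simp only [mem_preimage, mem_singleton_iff]
  constructor
  · intro hwV
    exact Subtype.ext (hw w ⟨hwK, hwV⟩)
  · intro h
    have := congrArg Subtype.val h
    simp only at this
    subst this
    exact hz.2

/-- split an open piece in two -/
lemma split_two (hKtd : IsTotallyDisconnected K) (hKiso : NoIsolatedPoints ↥K)
    {V : Set ℝ} (hV : IsOpen V) (hne : (K ∩ V).Nonempty) :
    ∃ V₁ V₂ : Set ℝ, IsOpen V₁ ∧ IsOpen V₂ ∧ V₁ ⊆ V ∧ V₂ ⊆ V ∧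
      (K ∩ V₁).Nonempty ∧ (K ∩ V₂).Nonempty ∧ Disjoint V₁ V₂ ∧
      K ∩ V = (K ∩ V₁) ∪ (K ∩ V₂) := by
  obtain ⟨z, hz⟩ := hne
  obtain ⟨w, hw, hwz⟩ := exists_two hKiso hV hz
  rcases hwz.lt_or_gt with h | h
  · obtain ⟨q, h1, h2, hq⟩ := exists_cut hKtd hw.1 hz.1 h
    refine ⟨V ∩ Iio q, V ∩ Ioi q, hV.inter isOpen_Iio, hV.inter isOpen_Ioi,
      inter_subset_left, inter_subset_left, ⟨w, hw.1, hw.2, h1⟩, ⟨z, hz.1, hz.2, h2⟩, ?_, ?_⟩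
    · exact (Set.disjoint_left).mpr (fun a ha hb => absurd (lt_trans ha.2 hb.2) (lt_irrefl a))
    · ext a
      constructor
      · rintro ⟨haK, haV⟩
        rcases lt_trichotomy a q with h' | rfl | h'
        · exact Or.inl ⟨haK, haV, h'⟩
        · exact absurd haK hq
        · exact Or.inr ⟨haK, haV, h'⟩
      · rintro (⟨haK, haV, _⟩ | ⟨haK, haV, _⟩) <;> exact ⟨haK, haV⟩
  · obtain ⟨q, h1, h2, hq⟩ := exists_cut hKtd hz.1 hw.1 h
    refine ⟨V ∩ Iio q, V ∩ Ioi q, hV.inter isOpen_Iio, hV.inter isOpen_Ioi,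
      inter_subset_left, inter_subset_left, ⟨z, hz.1, hz.2, h1⟩, ⟨w, hw.1, hw.2, h2⟩, ?_, ?_⟩
    · exact (Set.disjoint_left).mpr (fun a ha hb => absurd (lt_trans ha.2 hb.2) (lt_irrefl a))
    · ext a
      constructor
      · rintro ⟨haK, haV⟩
        rcases lt_trichotomy a q with h' | rfl | h'
        · exact Or.inl ⟨haK, haV, h'⟩
        · exact absurd haK hq
        · exact Or.inr ⟨haK, haV, h'⟩
      · rintro (⟨haK, haV, _⟩ | ⟨haK, haV, _⟩) <;> exact ⟨haK, haV⟩

/-- a good family: partition of `K ∩ V` into `n` open pieces with small traces -/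
def GoodFam (K V : Set ℝ) (ε : ℝ) (n : ℕ) (W : ℕ → Set ℝ) : Prop :=
  (∀ i < n, IsOpen (W i)) ∧ (∀ i < n, W i ⊆ V) ∧ (∀ i < n, (K ∩ W i).Nonempty) ∧
  (∀ i < n, ∀ j < n, i ≠ j → Disjoint (W i) (W j)) ∧
  (∀ x ∈ K ∩ V, ∃ i < n, x ∈ W i) ∧
  (∀ i < n, ∀ x ∈ K ∩ W i, ∀ y ∈ K ∩ W i, |x - y| ≤ ε)

lemma GoodFam.pad (hKtd : IsTotallyDisconnected K) (hKiso : NoIsolatedPoints ↥K)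
    {V : Set ℝ} {ε : ℝ} {n : ℕ} {W : ℕ → Set ℝ} (hn : 0 < n)
    (h : GoodFam K V ε n W) : ∃ W', GoodFam K V ε (n + 1) W' := by
  obtain ⟨hop, hsub, hne, hdisj, hcov, hmesh⟩ := h
  obtain ⟨V₁, V₂, hV₁, hV₂, hV₁s, hV₂s, hV₁n, hV₂n, hdisj12, hsplit⟩ :=
    split_two hKtd hKiso (hop 0 hn) (hne 0 hn)
  have hn0 : n ≠ 0 := hn.ne'
  set D : ℕ → Set ℝ := fun i => if i = 0 then V₁ else if i = n then V₂ else W i with hD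
  have hD0 : D 0 = V₁ := by simp [hD]
  have hDn : D n = V₂ := by simp [hD, hn0]
  have hDi : ∀ i, i ≠ 0 → i ≠ n → D i = W i := by
    intro i h1 h2; simp [hD, h1, h2]
  have hcase : ∀ i, i < n + 1 → (D i ⊆ W 0 ∧ (i = 0 ∨ i = n)) ∨
      (D i = W i ∧ i ≠ 0 ∧ i ≠ n ∧ i < n) := by
    intro i hi
    by_cases h1 : i = 0
    · subst h1; exact Or.inl ⟨hD0 ▸ hV₁s, Or.inl rfl⟩
    by_cases h2 : i = n
    · subst h2; exact Or.inl ⟨hDn ▸ hV₂s, Or.inr rfl⟩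
    · exact Or.inr ⟨hDi i h1 h2, h1, h2, by omega⟩
  refine ⟨D, ?_, ?_, ?_, ?_, ?_, ?_⟩
  · intro i hi
    rcases hcase i hi with ⟨_, (rfl | rfl)⟩ | ⟨he, _⟩
    · rw [hD0]; exact hV₁
    · rw [hDn]; exact hV₂
    · rw [he]; exact hop i (by omega)
  · intro i hi
    rcases hcase i hi with ⟨hs, _⟩ | ⟨he, _, _, hlt⟩
    · exact hs.trans (hsub 0 hn)
    · rw [he]; exact hsub i hlt
  · intro i hi
    rcases hcase i hi with ⟨_, (rfl | rfl)⟩ | ⟨he, _⟩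
    · rw [hD0]; exact hV₁n
    · rw [hDn]; exact hV₂n
    · rw [he]; exact hne i (by omega)
  · intro i hi j hj hij
    rcases hcase i hi with ⟨hsi, hci⟩ | ⟨hei, h1i, h2i, hlti⟩ <;>
      rcases hcase j hj with ⟨hsj, hcj⟩ | ⟨hej, h1j, h2j, hltj⟩
    · have : (i = 0 ∧ j = n) ∨ (i = n ∧ j = 0) := by omega
      rcases this with ⟨rfl, rfl⟩ | ⟨rfl, rfl⟩
      · rw [hD0, hDn]; exact hdisj12
      · rw [hD0, hDn]; exact hdisj12.symm
    · rw [hej]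
      exact Disjoint.mono hsi (le_refl _) (hdisj 0 hn j hltj h1j.symm)
    · rw [hei]
      exact Disjoint.mono (le_refl _) hsj (hdisj i hlti 0 hn h1i)
    · rw [hei, hej]
      exact hdisj i hlti j hltj hij
  · intro x hx
    obtain ⟨i, hi, hxi⟩ := hcov x hx
    by_cases h0 : i = 0
    · subst h0
      have : x ∈ (K ∩ V₁) ∪ (K ∩ V₂) := by rw [← hsplit]; exact ⟨hx.1, hxi⟩
      rcases this with h | h
      · exact ⟨0, by omega, by rw [hD0]; exact h.2⟩
      · exact ⟨n, by omega, by rw [hDn]; exact h.2⟩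
    · refine ⟨i, by omega, ?_⟩
      rw [hDi i h0 (by omega)]
      exact hxi
  · intro i hi x hx y hy
    rcases hcase i hi with ⟨hs, _⟩ | ⟨he, _, _, hlt⟩
    · exact hmesh 0 hn x ⟨hx.1, hs hx.2⟩ y ⟨hy.1, hs hy.2⟩
    · rw [he] at hx hy
      exact hmesh i hlt x hx y hy

end Cantor

section Cantor2
variable {K : Set ℝ}

lemma exists_goodfam (hKtd : IsTotallyDisconnected K) {V : Set ℝ} (hV : IsOpen V)
    (hC : IsCompact (K ∩ V)) (hne : (K ∩ V).Nonempty) {ε : ℝ} (hε : 0 < ε) :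
    ∃ n W, 0 < n ∧ GoodFam K V ε n W := by
  classical
  set C := K ∩ V with hCdef
  have hCK : C ⊆ K := inter_subset_left
  -- flanking cuts near every point
  have step1 : ∀ x : ℝ, ∃ q r : ℝ, x ∈ C →
      (q ∉ C ∧ r ∉ C ∧ q < x ∧ x < r ∧ r - q ≤ ε) := by
    intro x
    by_cases hx : x ∈ C
    · have hq : ∃ q, q ∉ C ∧ q < x ∧ x - q ≤ ε / 2 := by
        by_cases hy : ∃ y ∈ C, y ∈ Ico (x - ε/4) x
        · obtain ⟨y, hyC, hy1, hy2⟩ := hy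
          obtain ⟨q, hq1, hq2, hq3⟩ := exists_cut hKtd (hCK hyC) (hCK hx) hy2
          exact ⟨q, fun hqC => hq3 (hCK hqC), hq2, by linarith⟩
        · push_neg at hy
          refine ⟨x - ε/4, fun hqC => ?_, by linarith, by linarith⟩
          exact absurd ⟨le_refl _, by linarith⟩ (hy _ hqC)
      have hr : ∃ r, r ∉ C ∧ x < r ∧ r - x ≤ ε / 2 := by
        by_cases hy : ∃ y ∈ C, y ∈ Ioc x (x + ε/4)
        · obtain ⟨y, hyC, hy1, hy2⟩ := hy
          obtain ⟨r, hr1, hr2, hr3⟩ := exists_cut hKtd (hCK hx) (hCK hyC) hy1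
          exact ⟨r, fun hrC => hr3 (hCK hrC), hr1, by linarith⟩
        · push_neg at hy
          refine ⟨x + ε/4, fun hrC => ?_, by linarith, by linarith⟩
          exact absurd ⟨by linarith, le_refl _⟩ (hy _ hrC)
      obtain ⟨q, hq1, hq2, hq3⟩ := hq
      obtain ⟨r, hr1, hr2, hr3⟩ := hr
      exact ⟨q, r, fun _ => ⟨hq1, hr1, hq2, hr2, by linarith⟩⟩
    · exact ⟨0, 0, fun h => absurd h hx⟩
  choose q r hqr using step1
  -- finite subcover
  have hcov : C ⊆ ⋃ x ∈ C, Ioo (q x) (r x) := by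
    intro x hx
    obtain ⟨_, _, h3, h4, _⟩ := hqr x hx
    exact mem_biUnion hx ⟨h3, h4⟩
  obtain ⟨b, hbC, hbfin, hbcov⟩ :=
    hC.elim_finite_subcover_image (fun x _ => isOpen_Ioo) hcov
  set Q : Finset ℝ := hbfin.toFinset.image q ∪ hbfin.toFinset.image r with hQdef
  have hQnotC : ∀ c ∈ Q, c ∉ C := by
    intro c hc
    rw [hQdef, Finset.mem_union] at hc
    rcases hc with hc | hc <;>
    · obtain ⟨x, hx, rfl⟩ := Finset.mem_image.mp hc
      have hxC : x ∈ C := hbC (hbfin.mem_toFinset.mp hx)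
      obtain ⟨h1, h2, _⟩ := hqr x hxC
      first | exact h1 | exact h2
  have hflank : ∀ x ∈ C, ∃ x₀ ∈ hbfin.toFinset, q x₀ < x ∧ x < r x₀ ∧ r x₀ - q x₀ ≤ ε := by
    intro x hx
    obtain ⟨x₀, hx₀, hxIoo⟩ := mem_iUnion₂.mp (hbcov hx)
    have hx₀C : x₀ ∈ C := hbC hx₀
    obtain ⟨_, _, _, _, h5⟩ := hqr x₀ hx₀C
    exact ⟨x₀, hbfin.mem_toFinset.mpr hx₀, hxIoo.1, hxIoo.2, h5⟩
  have hqQ : ∀ x ∈ hbfin.toFinset, q x ∈ Q := by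
    intro x hx; rw [hQdef, Finset.mem_union]; exact Or.inl (Finset.mem_image_of_mem q hx)
  have hrQ : ∀ x ∈ hbfin.toFinset, r x ∈ Q := by
    intro x hx; rw [hQdef, Finset.mem_union]; exact Or.inr (Finset.mem_image_of_mem r hx)
  -- the pieces
  set P : Finset (ℝ × ℝ) := (Q ×ˢ Q).filter
    (fun p => p.1 < p.2 ∧ (∀ c ∈ Q, ¬(p.1 < c ∧ c < p.2)) ∧ (C ∩ Ioo p.1 p.2).Nonempty)
    with hPdef
  have hPmem : ∀ p ∈ P, p.1 ∈ Q ∧ p.2 ∈ Q ∧ p.1 < p.2 ∧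
      (∀ c ∈ Q, ¬(p.1 < c ∧ c < p.2)) ∧ (C ∩ Ioo p.1 p.2).Nonempty := by
    intro p hp
    rw [hPdef, Finset.mem_filter, Finset.mem_product] at hp
    exact ⟨hp.1.1, hp.1.2, hp.2.1, hp.2.2.1, hp.2.2.2⟩
  have hPcov : ∀ x ∈ C, ∃ p ∈ P, x ∈ Ioo p.1 p.2 := by
    intro x hx
    obtain ⟨x₀, hx₀, h1, h2, _⟩ := hflank x hx
    set Qlt := Q.filter (fun y => y < x) with hQltdef
    set Qgt := Q.filter (fun y => x < y) with hQgtdef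
    have hQlt : Qlt.Nonempty := ⟨q x₀, Finset.mem_filter.mpr ⟨hqQ _ hx₀, h1⟩⟩
    have hQgt : Qgt.Nonempty := ⟨r x₀, Finset.mem_filter.mpr ⟨hrQ _ hx₀, h2⟩⟩
    set A := Qlt.max' hQlt with hA
    set B := Qgt.min' hQgt with hB
    have hAmem := Finset.mem_filter.mp (Qlt.max'_mem hQlt)
    have hBmem := Finset.mem_filter.mp (Qgt.min'_mem hQgt)
    have hAx : A < x := hAmem.2
    have hxB : x < B := hBmem.2
    have hnocut : ∀ c ∈ Q, ¬(A < c ∧ c < B) := by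
      rintro c hc ⟨hc1, hc2⟩
      rcases lt_trichotomy c x with h | rfl | h
      · exact absurd (Finset.le_max' Qlt c (Finset.mem_filter.mpr ⟨hc, h⟩)) (not_le.mpr hc1)
      · exact hQnotC c hc hx
      · exact absurd (Finset.min'_le Qgt c (Finset.mem_filter.mpr ⟨hc, h⟩)) (not_le.mpr hc2)
    refine ⟨(A, B), ?_, hAx, hxB⟩
    rw [hPdef, Finset.mem_filter, Finset.mem_product]
    exact ⟨⟨hAmem.1, hBmem.1⟩, lt_trans hAx hxB, hnocut, ⟨x, hx, hAx, hxB⟩⟩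
  have hPdiam : ∀ p ∈ P, ∀ x ∈ C ∩ Ioo p.1 p.2, ∀ y ∈ C ∩ Ioo p.1 p.2, |x - y| ≤ ε := by
    intro p hp x hx y hy
    obtain ⟨_, _, _, hnocut, _⟩ := hPmem p hp
    obtain ⟨x₀, hx₀, h1, h2, h3⟩ := hflank x hx.1
    have hq1 : q x₀ ≤ p.1 := by
      by_contra hlt
      exact hnocut (q x₀) (hqQ _ hx₀) ⟨not_le.mp hlt, lt_trans h1 hx.2.2⟩
    have hr1 : p.2 ≤ r x₀ := by
      by_contra hlt
      exact hnocut (r x₀) (hrQ _ hx₀) ⟨lt_trans hx.2.1 h2, not_le.mp hlt⟩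
    rw [abs_le]
    constructor
    · have := hx.2.1; have := hy.2.2; linarith
    · have := hx.2.2; have := hy.2.1; linarith
  have hPdisj : ∀ p ∈ P, ∀ p' ∈ P, p ≠ p' → Disjoint (Ioo p.1 p.2) (Ioo p'.1 p'.2) := by
    intro p hp p' hp' hne'
    rw [Set.disjoint_left]
    intro z hz hz'
    obtain ⟨h1Q, h2Q, hlt, hnocut, _⟩ := hPmem p hp
    obtain ⟨h1Q', h2Q', hlt', hnocut', _⟩ := hPmem p' hp'
    have he1 : p.1 = p'.1 := by
      rcases lt_trichotomy p.1 p'.1 with h | h | h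
      · exact absurd ⟨h, lt_trans hz'.1 hz.2⟩ (hnocut p'.1 h1Q')
      · exact h
      · exact absurd ⟨h, lt_trans hz.1 hz'.2⟩ (hnocut' p.1 h1Q)
    have he2 : p.2 = p'.2 := by
      rcases lt_trichotomy p.2 p'.2 with h | h | h
      · exact absurd ⟨lt_trans hz'.1 hz.2, h⟩ (hnocut' p.2 h2Q)
      · exact h
      · exact absurd ⟨lt_trans hz.1 hz'.2, h⟩ (hnocut p'.2 h2Q')
    exact hne' (Prod.ext he1 he2)
  -- indexing
  set n := P.card with hn
  have hn0 : 0 < n := by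
    obtain ⟨x, hx⟩ := hne
    obtain ⟨p, hp, _⟩ := hPcov x hx
    exact Finset.card_pos.mpr ⟨p, hp⟩
  set en : ↥P ≃ Fin n := P.equivFin with hen
  set Pt : ℕ → ℝ × ℝ := fun i => if h : i < n then (en.symm ⟨i, h⟩ : ℝ × ℝ) else (0, 0)
    with hPt
  have hPtmem : ∀ i (h : i < n), Pt i ∈ P := by
    intro i h
    rw [hPt]; simp only [dif_pos h]
    exact (en.symm ⟨i, h⟩).2
  refine ⟨n, fun i => Ioo (Pt i).1 (Pt i).2 ∩ V, hn0, ?_, ?_, ?_, ?_, ?_, ?_⟩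
  · exact fun i _ => isOpen_Ioo.inter hV
  · exact fun i _ => inter_subset_right
  · intro i hi
    obtain ⟨_, _, _, _, ⟨x, hxC, hxI⟩⟩ := hPmem _ (hPtmem i hi)
    exact ⟨x, hxC.1, hxI, hxC.2⟩
  · intro i hi j hj hij
    have hne2 : Pt i ≠ Pt j := by
      rw [hPt]; simp only [dif_pos hi, dif_pos hj]
      intro hcon
      have : en.symm ⟨i, hi⟩ = en.symm ⟨j, hj⟩ := Subtype.ext hcon
      have := en.symm.injective this
      exact hij (by simpa using congrArg Fin.val this)
    exact Disjoint.mono inter_subset_left inter_subset_left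
      (hPdisj _ (hPtmem i hi) _ (hPtmem j hj) hne2)
  · intro x hx
    obtain ⟨p, hp, hxp⟩ := hPcov x hx
    refine ⟨(en ⟨p, hp⟩ : Fin n).val, (en ⟨p, hp⟩ : Fin n).isLt, ?_⟩
    show x ∈ Ioo (Pt (en ⟨p, hp⟩ : Fin n).val).1 (Pt (en ⟨p, hp⟩ : Fin n).val).2 ∩ V
    have : Pt (en ⟨p, hp⟩ : Fin n).val = p := by
      rw [hPt]
      simp only [dif_pos (en ⟨p, hp⟩ : Fin n).isLt]
      have : (⟨(en ⟨p, hp⟩ : Fin n).val, (en ⟨p, hp⟩ : Fin n).isLt⟩ : Fin n) = en ⟨p, hp⟩ :=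
        Fin.ext rfl
      rw [this, Equiv.symm_apply_apply]
    rw [this]
    exact ⟨hxp, hx.2⟩
  · intro i hi x hx y hy
    refine hPdiam _ (hPtmem i hi) x ⟨⟨hx.1, hx.2.2⟩, hx.2.1⟩ y ⟨⟨hy.1, hy.2.2⟩, hy.2.1⟩

end Cantor2

structure RPart (K : Set ℝ) where
  N : ℕ
  I : ℕ → Set ℝ
  pos : 0 < N
  opn : ∀ j < N, IsOpen (I j)
  ne : ∀ j < N, (K ∩ I j).Nonempty
  disj : ∀ i, i < N → ∀ j, j < N → ∀ x, x ∈ K → x ∈ I i → x ∈ I j → i = j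
  cover : ∀ x ∈ K, ∃ j < N, x ∈ I j

section Cantor3
variable {K : Set ℝ}

lemma RPart.trace_isClosed (hKcl : IsClosed K) (P : RPart K) {j : ℕ} (hj : j < P.N) :
    IsClosed (K ∩ P.I j) := by
  have heq : K ∩ P.I j = K \ ⋃ i ∈ (Finset.range P.N).erase j, P.I i := by
    ext x
    constructor
    · rintro ⟨hxK, hxI⟩
      refine ⟨hxK, fun hxU => ?_⟩
      obtain ⟨i, hi, hxi⟩ := mem_iUnion₂.mp hxU
      obtain ⟨hne', hir⟩ := Finset.mem_erase.mp hi
      exact hne' (P.disj i (Finset.mem_range.mp hir) j hj x hxK hxi hxI)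
    · rintro ⟨hxK, hxn⟩
      obtain ⟨j', hj', hxj'⟩ := P.cover x hxK
      by_cases h : j' = j
      · exact ⟨hxK, h ▸ hxj'⟩
      · exact absurd (mem_biUnion (Finset.mem_erase.mpr ⟨h, Finset.mem_range.mpr hj'⟩) hxj') hxn
  rw [heq]
  exact hKcl.sdiff (isOpen_biUnion fun i hi =>
    P.opn i (Finset.mem_range.mp (Finset.mem_erase.mp hi).2))

lemma goodfam_pad_to (hKtd : IsTotallyDisconnected K) (hKiso : NoIsolatedPoints ↥K)
    {V : Set ℝ} {ε : ℝ} {n : ℕ} {W : ℕ → Set ℝ} (hn : 0 < n) (h : GoodFam K V ε n W) :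
    ∀ m, n ≤ m → ∃ W', GoodFam K V ε m W' := by
  intro m hm
  induction m, hm using Nat.le_induction with
  | base => exact ⟨W, h⟩
  | succ m hm ih =>
    obtain ⟨W', hW'⟩ := ih
    exact hW'.pad hKtd hKiso (by omega)

lemma refine_part (hKc : IsCompact K) (hKtd : IsTotallyDisconnected K)
    (hKiso : NoIsolatedPoints ↥K) (P : RPart K) {ε : ℝ} (hε : 0 < ε) :
    ∃ P' : RPart K, P.N ∣ P'.N ∧ (∀ b < P'.N, P'.I b ⊆ P.I (b % P.N)) ∧
      (∀ b < P'.N, ∀ x ∈ K ∩ P'.I b, ∀ y ∈ K ∩ P'.I b, |x - y| ≤ ε) := by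
  classical
  have hN := P.pos
  have hget : ∀ j, ∃ nW : ℕ × (ℕ → Set ℝ), j < P.N →
      0 < nW.1 ∧ GoodFam K (P.I j) ε nW.1 nW.2 := by
    intro j
    by_cases hj : j < P.N
    · obtain ⟨n, W, hn, hW⟩ := exists_goodfam hKtd (P.opn j hj)
        (hKc.of_isClosed_subset (P.trace_isClosed hKc.isClosed hj) inter_subset_left)
        (P.ne j hj) hε
      exact ⟨(n, W), fun _ => ⟨hn, hW⟩⟩
    · exact ⟨(1, fun _ => ∅), fun h => absurd h hj⟩
  choose nW hnW using hget
  set m := (Finset.range P.N).sup (fun j => (nW j).1) with hm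
  have hmj : ∀ j < P.N, (nW j).1 ≤ m :=
    fun j hj => Finset.le_sup (f := fun j => (nW j).1) (Finset.mem_range.mpr hj)
  have hm0 : 0 < m := by
    have := hmj 0 hN
    have h0 := (hnW 0 hN).1
    omega
  have hWm : ∀ j, ∃ W', j < P.N → GoodFam K (P.I j) ε m W' := by
    intro j
    by_cases hj : j < P.N
    · obtain ⟨W', hW'⟩ := goodfam_pad_to hKtd hKiso (hnW j hj).1 (hnW j hj).2 m (hmj j hj)
      exact ⟨W', fun _ => hW'⟩
    · exact ⟨fun _ => ∅, fun h => absurd h hj⟩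
  choose Wm hWm' using hWm
  have hdiv : ∀ b, b < P.N * m → b % P.N < P.N ∧ b / P.N < m := by
    intro b hb
    exact ⟨Nat.mod_lt b hN, Nat.div_lt_of_lt_mul hb⟩
  set I' : ℕ → Set ℝ := fun b => if b < P.N * m then Wm (b % P.N) (b / P.N) else ∅ with hI'
  have hI'eq : ∀ b, b < P.N * m → I' b = Wm (b % P.N) (b / P.N) := by
    intro b hb
    rw [hI']
    exact if_pos hb
  refine ⟨⟨P.N * m, I', Nat.mul_pos hN hm0, ?_, ?_, ?_, ?_⟩, ⟨m, rfl⟩, ?_, ?_⟩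
  · intro b hb
    rw [hI'eq b hb]
    exact (hWm' (b % P.N) (hdiv b hb).1).1 _ (hdiv b hb).2
  · intro b hb
    rw [hI'eq b hb]
    exact (hWm' (b % P.N) (hdiv b hb).1).2.2.1 _ (hdiv b hb).2
  · intro i hi j hj x hxK hxi hxj
    rw [hI'eq i hi] at hxi
    rw [hI'eq j hj] at hxj
    have gi := hWm' (i % P.N) (hdiv i hi).1
    have gj := hWm' (j % P.N) (hdiv j hj).1
    have hmodeq : i % P.N = j % P.N := by
      apply P.disj _ (hdiv i hi).1 _ (hdiv j hj).1 x hxK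
      · exact gi.2.1 _ (hdiv i hi).2 hxi
      · exact gj.2.1 _ (hdiv j hj).2 hxj
    have hdiveq : i / P.N = j / P.N := by
      by_contra hne'
      rw [hmodeq] at hxi
      have := gj.2.2.2.1 _ (hdiv i hi).2 _ (hdiv j hj).2 hne'
      exact (Set.disjoint_left.mp this hxi) hxj
    have d1 := Nat.div_add_mod i P.N
    have d2 := Nat.div_add_mod j P.N
    rw [hdiveq, hmodeq] at d1
    omega
  · intro x hxK
    obtain ⟨j, hj, hxj⟩ := P.cover x hxK
    obtain ⟨i, hi, hxi⟩ := (hWm' j hj).2.2.2.2.1 x ⟨hxK, hxj⟩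
    have hb : j + P.N * i < P.N * m := by
      calc j + P.N * i < P.N + P.N * i := by omega
        _ = P.N * (i + 1) := by ring
        _ ≤ P.N * m := Nat.mul_le_mul_left _ (by omega)
    refine ⟨j + P.N * i, hb, ?_⟩
    rw [hI'eq _ hb, Nat.add_mul_mod_self_left, Nat.mod_eq_of_lt hj,
      Nat.add_mul_div_left _ _ hN, Nat.div_eq_of_lt hj, Nat.zero_add]
    exact hxi
  · intro b hb
    have hb' : b < P.N * m := hb
    show I' b ⊆ P.I (b % P.N)
    rw [hI'eq b hb']
    exact (hWm' (b % P.N) (hdiv b hb').1).2.1 _ (hdiv b hb').2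
  · intro b hb x hx y hy
    have hb' : b < P.N * m := hb
    have hx' : x ∈ K ∩ I' b := hx
    have hy' : y ∈ K ∩ I' b := hy
    rw [hI'eq b hb'] at hx' hy'
    exact (hWm' (b % P.N) (hdiv b hb').1).2.2.2.2.2 _ (hdiv b hb').2 x hx' y hy'

end Cantor3


lemma cantor_construction {K : Set ℝ} (hKne : K.Nonempty) (hKc : IsCompact K)
    (hKtd : IsTotallyDisconnected K) (hKiso : NoIsolatedPoints ↥K) :
    ∃ F : ℝ → ℝ, Continuous F ∧ MinimalSystemOn F K ∧
      ∀ x, F x ∈ Icc (sInf K) (sSup K) := by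
  classical
  have hstep : ∀ (P : RPart K) (k : ℕ), ∃ P' : RPart K,
      P.N ∣ P'.N ∧ (∀ b < P'.N, P'.I b ⊆ P.I (b % P.N)) ∧
      (∀ b < P'.N, ∀ x ∈ K ∩ P'.I b, ∀ y ∈ K ∩ P'.I b, |x - y| ≤ 1/(k+1)) :=
    fun P k => refine_part hKc hKtd hKiso P (by positivity)
  choose step hdvd hnest hmesh using hstep
  set P₀ : RPart K := ⟨1, fun _ => univ, one_pos, fun _ _ => isOpen_univ,
    fun j _ => by simpa using hKne, fun i hi j hj _ _ _ _ => by omega,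
    fun x _ => ⟨0, one_pos, mem_univ x⟩⟩ with hP₀
  set T : ℕ → RPart K := fun k => Nat.rec (step P₀ 0) (fun k Pk => step Pk (k+1)) k with hT
  have hTsucc : ∀ k, T (k+1) = step (T k) (k+1) := fun k => rfl
  have hT0 : T 0 = step P₀ 0 := rfl
  set Nk : ℕ → ℕ := fun k => (T k).N with hNk
  set Ik : ℕ → ℕ → Set ℝ := fun k => (T k).I with hIk
  have hNpos : ∀ k, 0 < Nk k := fun k => (T k).pos
  have hdvd' : ∀ k, Nk k ∣ Nk (k+1) := fun k => hdvd (T k) (k+1)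
  have hnest' : ∀ k, ∀ b < Nk (k+1), Ik (k+1) b ⊆ Ik k (b % Nk k) := by
    intro k
    have := hnest (T k) (k+1)
    rw [← hTsucc k] at this
    exact this
  have hmesh' : ∀ k, ∀ b < Nk k, ∀ x ∈ K ∩ Ik k b, ∀ y ∈ K ∩ Ik k b,
      |x - y| ≤ 1/(k+1) := by
    intro k
    cases k with
    | zero => exact hmesh P₀ 0
    | succ k =>
      have := hmesh (T k) (k+1)
      rw [← hTsucc k] at this
      push_cast at this ⊢
      convert this using 4 <;> ring_nf
  -- labels
  set lab : ℕ → ℝ → ℕ := fun k x =>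
    if hx : x ∈ K then Classical.choose ((T k).cover x hx) else 0 with hlab
  have hlab_spec : ∀ k (x : ℝ) (hx : x ∈ K), lab k x < Nk k ∧ x ∈ Ik k (lab k x) := by
    intro k x hx
    have h := Classical.choose_spec ((T k).cover x hx)
    rw [hlab]
    simp only [dif_pos hx]
    exact h
  have hlab_lt : ∀ k (x : ℝ), x ∈ K → lab k x < Nk k := fun k x hx => (hlab_spec k x hx).1
  have hlab_mem : ∀ k (x : ℝ), x ∈ K → x ∈ Ik k (lab k x) := fun k x hx => (hlab_spec k x hx).2
  have hlab_uniq : ∀ k (x : ℝ), x ∈ K → ∀ j < Nk k, x ∈ Ik k j → j = lab k x := by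
    intro k x hx j hj hxj
    exact (T k).disj j hj (lab k x) (hlab_lt k x hx) x hx hxj (hlab_mem k x hx)
  have hlab_compat : ∀ k (x : ℝ), x ∈ K → lab (k+1) x % Nk k = lab k x := by
    intro k x hx
    apply hlab_uniq k x hx _ (Nat.mod_lt _ (hNpos k))
    exact hnest' k _ (hlab_lt (k+1) x hx) (hlab_mem (k+1) x hx)
  -- separation from mesh
  have hsep : ∀ x ∈ K, ∀ y ∈ K, (∀ k, lab k x = lab k y) → x = y := by
    intro x hx y hy hl
    by_contra hne
    have habs : 0 < |x - y| := abs_pos.mpr (sub_ne_zero.mpr hne)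
    obtain ⟨k, hk⟩ := exists_nat_one_div_lt habs
    have := hmesh' k (lab k x) (hlab_lt k x hx) x ⟨hx, hlab_mem k x hx⟩ y
      ⟨hy, hl k ▸ hlab_mem k y hy⟩
    push_cast at this hk
    linarith
  -- the shift maps
  have hshift : ∀ (c : ℕ → ℕ), (∀ k, c (k+1) % Nk k = c k % Nk k) →
      ∃ Φ : ℝ → ℝ, ∀ x ∈ K, Φ x ∈ K ∧ ∀ k, lab k (Φ x) = (lab k x + c k) % Nk k := by
    intro c hc
    have key : ∀ x ∈ K, ∃ y ∈ K, ∀ k, lab k y = (lab k x + c k) % Nk k := by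
      intro x hx
      set S : ℕ → Set ℝ := fun k => K ∩ Ik k ((lab k x + c k) % Nk k) with hS
      have htgt : ∀ k, ((lab (k+1) x + c (k+1)) % Nk (k+1)) % Nk k
          = (lab k x + c k) % Nk k := by
        intro k
        rw [Nat.mod_mod_of_dvd _ (hdvd' k)]
        refine Nat.ModEq.add ?_ (hc k)
        show lab (k+1) x % Nk k = lab k x % Nk k
        rw [hlab_compat k x hx, Nat.mod_eq_of_lt (hlab_lt k x hx)]
      have hSclosed : ∀ k, IsClosed (S k) :=
        fun k => (T k).trace_isClosed hKc.isClosed (Nat.mod_lt _ (hNpos k))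
      have hScompact : ∀ k, IsCompact (S k) :=
        fun k => hKc.of_isClosed_subset (hSclosed k) inter_subset_left
      have hSne : ∀ k, (S k).Nonempty := fun k => (T k).ne _ (Nat.mod_lt _ (hNpos k))
      have hSnested : ∀ k, S (k+1) ⊆ S k := by
        intro k z hz
        refine ⟨hz.1, ?_⟩
        have := hnest' k _ (Nat.mod_lt _ (hNpos (k+1))) hz.2
        rwa [htgt k] at this
      obtain ⟨y, hy⟩ := IsCompact.nonempty_iInter_of_sequence_nonempty_isCompact_isClosed
        S hSnested hSne (hScompact 0) hSclosed
      rw [mem_iInter] at hy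
      refine ⟨y, (hy 0).1, fun k => ?_⟩
      exact ((hlab_uniq k y (hy k).1 _ (Nat.mod_lt _ (hNpos k)) (hy k).2)).symm
    refine ⟨fun x => if hx : x ∈ K then (key x hx).choose else x, ?_⟩
    intro x hx
    simp only [dif_pos hx]
    obtain ⟨h1, h2⟩ := (key x hx).choose_spec
    exact ⟨h1, h2⟩
  obtain ⟨h, hh⟩ := hshift (fun _ => 1) (fun k => rfl)
  have hgc : ∀ k, (Nk (k+1) - 1) % Nk k = (Nk k - 1) % Nk k := by
    intro k
    obtain ⟨t, ht⟩ := hdvd' k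
    have ht1 : 1 ≤ t := by
      rcases Nat.eq_zero_or_pos t with rfl | h
      · exfalso; have := hNpos (k+1); omega
      · exact h
    have hN1 := hNpos k
    have : Nk (k+1) - 1 = Nk k * (t-1) + (Nk k - 1) := by
      rw [ht]
      cases t with
      | zero => omega
      | succ t =>
        rw [Nat.succ_sub_one, Nat.mul_succ]
        omega
    rw [this, Nat.mul_add_mod]
  obtain ⟨g, hg⟩ := hshift (fun k => Nk k - 1) hgc
  -- iterates of h
  have hiter : ∀ (n : ℕ) (x : ℝ), x ∈ K → h^[n] x ∈ K ∧
      ∀ k, lab k (h^[n] x) = (lab k x + n) % Nk k := by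
    intro n
    induction n with
    | zero =>
      intro x hx
      exact ⟨hx, fun k => (Nat.mod_eq_of_lt (hlab_lt k x hx)).symm⟩
    | succ n ih =>
      intro x hx
      obtain ⟨h1, h2⟩ := ih x hx
      rw [Function.iterate_succ_apply']
      refine ⟨(hh _ h1).1, fun k => ?_⟩
      rw [(hh _ h1).2 k, h2 k, Nat.mod_add_mod, Nat.add_assoc]
  -- continuity of h on K
  have hcont : ContinuousOn h K := by
    intro x hx
    rw [ContinuousWithinAt, Metric.tendsto_nhds]
    intro ε hε
    obtain ⟨k, hk⟩ := exists_nat_one_div_lt hε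
    rw [Filter.eventually_iff, mem_nhdsWithin]
    refine ⟨Ik k (lab k x), (T k).opn _ (hlab_lt k x hx), hlab_mem k x hx, ?_⟩
    rintro y ⟨hyI, hyK⟩
    have hly : lab k y = lab k x := ((hlab_uniq k y hyK _ (hlab_lt k x hx) hyI)).symm
    have hmem1 : h y ∈ K ∩ Ik k ((lab k x + 1) % Nk k) := by
      refine ⟨(hh y hyK).1, ?_⟩
      have := hlab_mem k (h y) (hh y hyK).1
      rwa [(hh y hyK).2 k, hly] at this
    have hmem2 : h x ∈ K ∩ Ik k ((lab k x + 1) % Nk k) := by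
      refine ⟨(hh x hx).1, ?_⟩
      have := hlab_mem k (h x) (hh x hx).1
      rwa [(hh x hx).2 k] at this
    have := hmesh' k _ (Nat.mod_lt _ (hNpos k)) _ hmem1 _ hmem2
    show dist (h y) (h x) < ε
    rw [Real.dist_eq]
    push_cast at this hk
    linarith
  -- Tietze extension, clamped
  obtain ⟨G, hG⟩ := ContinuousMap.exists_restrict_eq (Y := ℝ) hKc.isClosed
    ⟨K.restrict h, hcont.restrict⟩
  have hGeq : ∀ x (hx : x ∈ K), G x = h x := by
    intro x hx
    have := congrFun (congrArg DFunLike.coe hG) ⟨x, hx⟩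
    exact this
  set lo := sInf K with hlo
  set hi := sSup K with hhi
  have hKIcc : ∀ x ∈ K, x ∈ Icc lo hi := fun x hx =>
    ⟨csInf_le hKc.bddBelow hx, le_csSup hKc.bddAbove hx⟩
  have hlohi : lo ≤ hi := by
    obtain ⟨x, hx⟩ := hKne
    exact (hKIcc x hx).1.trans (hKIcc x hx).2
  set F : ℝ → ℝ := fun x => max lo (min hi (G x)) with hF
  have hFeq : ∀ x ∈ K, F x = h x := by
    intro x hx
    have hhK := (hh x hx).1
    rw [hF]
    simp only
    rw [hGeq x hx, min_eq_right (hKIcc _ hhK).2, max_eq_right (hKIcc _ hhK).1]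
  have hFcont : Continuous F := continuous_const.max (continuous_const.min G.continuous)
  have hFIcc : ∀ x, F x ∈ Icc lo hi := fun x =>
    ⟨le_max_left _ _, max_le hlohi (min_le_left _ _)⟩
  -- minimality
  refine ⟨F, hFcont, ⟨hKne, ?_, ?_⟩, hFIcc⟩
  · apply Subset.antisymm
    · rintro _ ⟨x, hx, rfl⟩
      rw [hFeq x hx]
      exact (hh x hx).1
    · intro y hy
      refine ⟨g y, (hg y hy).1, ?_⟩
      rw [hFeq _ (hg y hy).1]
      apply hsep _ (hh _ (hg y hy).1).1 _ hy
      intro k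
      rw [(hh _ (hg y hy).1).2 k, (hg y hy).2 k, Nat.mod_add_mod]
      have h1 := hlab_lt k y hy
      have h2 := hNpos k
      have : lab k y + (Nk k - 1) + 1 = lab k y + Nk k := by omega
      rw [this, Nat.add_mod_right, Nat.mod_eq_of_lt h1]
  · intro N hNK hNne hNcl hNinv
    have hinvh : ∀ x ∈ N, h x ∈ N := by
      intro x hxN
      have : F x ∈ N := hNinv (mem_image_of_mem F hxN)
      rwa [hFeq x (hNK hxN)] at this
    have hiterN : ∀ (n : ℕ), ∀ x ∈ N, h^[n] x ∈ N := by
      intro n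
      induction n with
      | zero => exact fun x hx => hx
      | succ n ih =>
        intro x hx
        rw [Function.iterate_succ_apply']
        exact hinvh _ (ih x hx)
    obtain ⟨x, hxN⟩ := hNne
    have hxK := hNK hxN
    refine Subset.antisymm hNK fun y hy => ?_
    rw [← hNcl.closure_eq]
    rw [Metric.mem_closure_iff]
    intro ε hε
    obtain ⟨k, hk⟩ := exists_nat_one_div_lt hε
    set n := lab k y + Nk k - lab k x with hn
    refine ⟨h^[n] x, hiterN n x hxN, ?_⟩
    have hbK := (hiter n x hxK).1
    have hlabb : lab k (h^[n] x) = lab k y := by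
      rw [(hiter n x hxK).2 k]
      have h1 := hlab_lt k x hxK
      have h2 := hlab_lt k y hy
      have : lab k x + n = lab k y + Nk k := by omega
      rw [this, Nat.add_mod_right, Nat.mod_eq_of_lt h2]
    have := hmesh' k (lab k y) (hlab_lt k y hy) y ⟨hy, hlab_mem k y hy⟩ (h^[n] x)
      ⟨hbK, hlabb ▸ hlab_mem k _ hbK⟩
    rw [Real.dist_eq]
    push_cast at this hk
    linarith [abs_sub_comm y (h^[n] x)]


section Transfer
variable {Y Z : Type*} [TopologicalSpace Y] [TopologicalSpace Z]

lemma minimal_image (e : Y ≃ₜ Z) {f : Y → Y} {M : Set Y} (h : MinimalSystemOn f M) :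
    MinimalSystemOn (e ∘ f ∘ e.symm) (e '' M) := by
  obtain ⟨hne, him, hmin⟩ := h
  have hsym : ∀ (s : Set Y), e.symm '' (e '' s) = s := fun s => by
    ext x; simp
  refine ⟨hne.image e, ?_, ?_⟩
  · rw [Set.image_comp, Set.image_comp, hsym, him]
  · intro N hN hNne hNcl hNinv
    have h2 : e.symm '' N = M := by
      apply hmin
      · rintro _ ⟨y, hyN, rfl⟩
        obtain ⟨m, hm, rfl⟩ := hN hyN
        simpa using hm
      · exact hNne.image _
      · exact (e.symm.isClosedMap) N hNcl
      · rintro _ ⟨_, ⟨y, hyN, rfl⟩, rfl⟩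
        refine ⟨e (f (e.symm y)), ?_, by simp⟩
        have := hNinv (mem_image_of_mem _ hyN)
        simpa using this
    have : e '' (e.symm '' N) = e '' M := by rw [h2]
    rwa [Set.image_image, (by ext x; simp : (fun y => e (e.symm y)) '' N = N)] at this

lemma mspace_image (e : Y ≃ₜ Z) {M : Set Y} (h : M ∈ MSpace Y) : e '' M ∈ MSpace Z := by
  obtain ⟨hc, f, hf, hm⟩ := h
  exact ⟨hc.image e.continuous, e ∘ f ∘ e.symm,
    e.continuous.comp (hf.comp e.symm.continuous), minimal_image e hm⟩

lemma mspace_image_iff (e : Y ≃ₜ Z) (M : Set Y) : M ∈ MSpace Y ↔ e '' M ∈ MSpace Z := by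
  refine ⟨mspace_image e, fun h => ?_⟩
  have := mspace_image e.symm h
  rwa [(by ext x; simp : e.symm '' (e '' M) = M)] at this

/-- characterization of no isolated points for subsets -/
lemma noiso_set_iff {X : Type*} [TopologicalSpace X] (A : Set X) :
    NoIsolatedPoints ↥A ↔ ∀ x ∈ A, ∀ U : Set X, IsOpen U → x ∈ U →
      ∃ y, y ∈ A ∩ U ∧ y ≠ x := by
  constructor
  · intro h x hx U hU hxU
    by_contra hb
    push_neg at hb
    apply h ⟨x, hx⟩
    rw [isOpen_induced_iff]
    refine ⟨U, hU, ?_⟩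
    ext ⟨y, hy⟩
    simp only [mem_preimage, mem_singleton_iff]
    constructor
    · intro hyU
      exact Subtype.ext (hb y ⟨hy, hyU⟩)
    · intro he
      have : y = x := congrArg Subtype.val he
      subst this
      exact hxU
  · rintro h ⟨x, hx⟩ hop
    rw [isOpen_induced_iff] at hop
    obtain ⟨U, hU, hUx⟩ := hop
    have hxU : x ∈ U := by
      have : (⟨x, hx⟩ : ↥A) ∈ (Subtype.val ⁻¹' U : Set ↥A) := by rw [hUx]; rfl
      exact this
    obtain ⟨y, ⟨hyA, hyU⟩, hyx⟩ := h x hx U hU hxU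
    have : (⟨y, hyA⟩ : ↥A) ∈ (Subtype.val ⁻¹' U : Set ↥A) := hyU
    rw [hUx] at this
    exact hyx (congrArg Subtype.val this)

lemma noiso_image_homeo (e : Y ≃ₜ Z) {M : Set Y} (h : NoIsolatedPoints ↥M) :
    NoIsolatedPoints ↥(e '' M) := by
  rw [noiso_set_iff] at h ⊢
  rintro _ ⟨x, hx, rfl⟩ U hU hxU
  obtain ⟨y, ⟨hyM, hyU⟩, hyx⟩ := h x hx (e ⁻¹' U) (hU.preimage e.continuous) hxU
  exact ⟨e y, ⟨mem_image_of_mem _ hyM, hyU⟩, fun hc => hyx (e.injective hc)⟩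

lemma td_image_homeo (e : Y ≃ₜ Z) {M : Set Y} (h : IsTotallyDisconnected M) :
    IsTotallyDisconnected (e '' M) := by
  intro t ht htc
  have h2 : e.symm '' t ⊆ M := by
    rintro _ ⟨y, hy, rfl⟩
    obtain ⟨m, hm, rfl⟩ := ht hy
    simpa using hm
  have hsub := h _ h2 (htc.image _ e.symm.continuous.continuousOn)
  intro a ha b hb
  have := hsub (mem_image_of_mem _ ha) (mem_image_of_mem _ hb)
  have : e.symm a = e.symm b := this
  simpa using congrArg e this

lemma cantor_image_homeo (e : Y ≃ₜ Z) {M : Set Y} (h : IsCantorSet M) :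
    IsCantorSet (e '' M) :=
  ⟨h.1.image e, h.2.1.image e.continuous, td_image_homeo e h.2.2.1,
    noiso_image_homeo e h.2.2.2⟩

lemma cantor_image_iff (e : Y ≃ₜ Z) (M : Set Y) : IsCantorSet M ↔ IsCantorSet (e '' M) := by
  refine ⟨cantor_image_homeo e, fun h => ?_⟩
  have := cantor_image_homeo e.symm h
  rwa [(by ext x; simp : e.symm '' (e '' M) = M)] at this

-- transfers along Subtype.val
variable {X : Type*} [TopologicalSpace X] {S : Set X}

lemma noiso_val_iff (M' : Set ↥S) :
    NoIsolatedPoints ↥M' ↔ NoIsolatedPoints ↥(Subtype.val '' M') := by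
  rw [noiso_set_iff, noiso_set_iff]
  constructor
  · rintro h _ ⟨x, hx, rfl⟩ U hU hxU
    obtain ⟨y, ⟨hyM, hyU⟩, hyx⟩ := h x hx (Subtype.val ⁻¹' U)
      (hU.preimage continuous_subtype_val) hxU
    exact ⟨y.1, ⟨mem_image_of_mem _ hyM, hyU⟩, fun hc => hyx (Subtype.ext hc)⟩
  · intro h x hx U' hU' hxU'
    rw [isOpen_induced_iff] at hU'
    obtain ⟨U, hU, rfl⟩ := hU'
    obtain ⟨y, ⟨hyM, hyU⟩, hyx⟩ := h x.1 (mem_image_of_mem _ hx) U hU hxU'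
    obtain ⟨y', hy', rfl⟩ := hyM
    exact ⟨y', ⟨hy', hyU⟩, fun hc => hyx (congrArg Subtype.val hc)⟩

lemma td_val_iff (M' : Set ↥S) :
    IsTotallyDisconnected M' ↔ IsTotallyDisconnected (Subtype.val '' M') := by
  constructor
  · intro h t ht htc
    have htr : t ⊆ range (Subtype.val : ↥S → X) := ht.trans (image_subset_range _ _)
    have himg : Subtype.val '' (Subtype.val ⁻¹' t) = t := image_preimage_eq_of_subset htr
    have hsub : (Subtype.val ⁻¹' t : Set ↥S) ⊆ M' := by
      intro a ha
      obtain ⟨b, hb, hba⟩ := ht ha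
      rwa [← (Subtype.ext hba : b = a)]
    have hpre : IsPreconnected (Subtype.val ⁻¹' t : Set ↥S) := by
      rw [← Topology.IsInducing.subtypeVal.isPreconnected_image, himg]
      exact htc
    have := h _ hsub hpre
    intro a ha b hb
    obtain ⟨a', ha', rfl⟩ := himg ▸ ha
    obtain ⟨b', hb', rfl⟩ := himg ▸ hb
    exact congrArg Subtype.val (this ha' hb')
  · intro h t ht htc
    have := h _ (image_mono ht) (htc.image _ continuous_subtype_val.continuousOn)
    intro a ha b hb
    exact Subtype.ext (this (mem_image_of_mem _ ha) (mem_image_of_mem _ hb))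

lemma cantor_val_iff (M' : Set ↥S) :
    IsCantorSet M' ↔ IsCantorSet (Subtype.val '' M') := by
  unfold IsCantorSet
  rw [← noiso_val_iff, ← td_val_iff, ← Subtype.isCompact_iff, Set.image_nonempty]

end Transfer


section Endgame

lemma real_forward {M : Set ℝ} (hM : M ∈ MSpace ℝ) :
    (M.Finite ∧ M.Nonempty) ∨ IsCantorSet M := by
  obtain ⟨hMc, f, hf, hmin⟩ := hM
  by_cases hfin : M.Finite
  · exact Or.inl ⟨hfin, hmin.1⟩
  · exact Or.inr ⟨hmin.1, hMc, td_of_infinite hMc hf hmin hfin,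
      no_isolated_of_infinite hMc hf hmin hfin⟩

lemma real_backward {M : Set ℝ} (hM : (M.Finite ∧ M.Nonempty) ∨ IsCantorSet M) :
    IsCompact M ∧ ∃ F : ℝ → ℝ, Continuous F ∧ MinimalSystemOn F M ∧
      ∀ x, F x ∈ Icc (sInf M) (sSup M) := by
  rcases hM with ⟨hfin, hne⟩ | ⟨hne, hc, htd, hiso⟩
  · exact ⟨hfin.isCompact, finite_construction hfin hne⟩
  · exact ⟨hc, cantor_construction hne hc htd hiso⟩

theorem thmR : MSpace ℝ = {M : Set ℝ | (M.Finite ∧ M.Nonempty) ∨ IsCantorSet M} := by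
  ext M
  constructor
  · exact real_forward
  · intro h
    obtain ⟨hc, F, h1, h2, _⟩ := real_backward h
    exact ⟨hc, F, h1, h2⟩

lemma ray_forward {M' : Set ↥(Ici (0:ℝ))} (h : M' ∈ MSpace ↥(Ici (0:ℝ))) :
    Subtype.val '' M' ∈ MSpace ℝ := by
  obtain ⟨hc, f, hf, hne, him, hmin⟩ := h
  set r : ℝ → ↥(Ici (0:ℝ)) := fun x => ⟨max x 0, le_max_right x 0⟩ with hr
  have hrc : Continuous r := (continuous_id.max continuous_const).subtype_mk _
  set F : ℝ → ℝ := fun x => (f (r x)).1 with hF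
  have hFc : Continuous F := continuous_subtype_val.comp (hf.comp hrc)
  have hkey : ∀ y : ↥(Ici (0:ℝ)), F y.1 = (f y).1 := by
    intro y
    rw [hF]
    simp only
    congr 2
    exact Subtype.ext (max_eq_left y.2)
  have him2 : F '' (Subtype.val '' M') = Subtype.val '' M' := by
    calc F '' (Subtype.val '' M') = (fun y : ↥(Ici (0:ℝ)) => F y.1) '' M' := by
          rw [Set.image_image]
    _ = (fun y : ↥(Ici (0:ℝ)) => (f y).1) '' M' := image_congr fun y _ => hkey y
    _ = Subtype.val '' (f '' M') := by rw [Set.image_image]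
    _ = Subtype.val '' M' := by rw [him]
  refine ⟨hc.image continuous_subtype_val, F, hFc, hne.image _, him2, ?_⟩
  intro N hN hNne hNcl hNinv
  set N' : Set ↥(Ici (0:ℝ)) := Subtype.val ⁻¹' N with hN'
  have hN'M : N' ⊆ M' := by
    intro a ha
    obtain ⟨b, hb, hba⟩ := hN ha
    rwa [← (Subtype.ext hba : b = a)]
  have hN'ne : N'.Nonempty := by
    obtain ⟨y, hy⟩ := hNne
    obtain ⟨a, _, rfl⟩ := hN hy
    exact ⟨a, hy⟩
  have hN'cl : IsClosed N' := hNcl.preimage continuous_subtype_val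
  have hN'inv : f '' N' ⊆ N' := by
    rintro _ ⟨a, ha, rfl⟩
    show (f a).1 ∈ N
    rw [← hkey a]
    exact hNinv ⟨a.1, ha, rfl⟩
  have hNM' := hmin N' hN'M hN'ne hN'cl hN'inv
  have hNval : Subtype.val '' N' = N :=
    image_preimage_eq_of_subset (hN.trans (image_subset_range _ _))
  rw [← hNval, hNM']

lemma ray_backward {M' : Set ↥(Ici (0:ℝ))}
    (h : ((Subtype.val '' M').Finite ∧ (Subtype.val '' M').Nonempty) ∨
      IsCantorSet (Subtype.val '' M')) : M' ∈ MSpace ↥(Ici (0:ℝ)) := by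
  obtain ⟨hMc, F, hFc, hFm, hFI⟩ := real_backward h
  have hne : (Subtype.val '' M').Nonempty := hFm.1
  have hsub0 : Subtype.val '' M' ⊆ Ici (0:ℝ) := by
    rintro _ ⟨a, _, rfl⟩
    exact a.2
  have hlo : (0:ℝ) ≤ sInf (Subtype.val '' M') := hsub0 (hMc.sInf_mem hne)
  have hF0 : ∀ x, 0 ≤ F x := fun x => le_trans hlo (hFI x).1
  set f : ↥(Ici (0:ℝ)) → ↥(Ici (0:ℝ)) := fun y => ⟨F y.1, hF0 y.1⟩ with hf
  have hfc : Continuous f := (hFc.comp continuous_subtype_val).subtype_mk _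
  refine ⟨Subtype.isCompact_iff.mpr hMc, f, hfc, hne.of_image, ?_, ?_⟩
  · apply Set.image_injective.mpr Subtype.val_injective
    calc Subtype.val '' (f '' M') = (fun a : ↥(Ici (0:ℝ)) => F a.1) '' M' := by
          rw [Set.image_image]
    _ = F '' (Subtype.val '' M') := by rw [Set.image_image]
    _ = Subtype.val '' M' := hFm.2.1
  · intro N' hN' hN'ne hN'cl hN'inv
    have hvcl : IsClosedEmbedding (Subtype.val : ↥(Ici (0:ℝ)) → ℝ) :=
      isClosed_Ici.isClosedEmbedding_subtypeVal
    have h2 := hFm.2.2 (Subtype.val '' N') (image_mono hN') (hN'ne.image _)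
      (hvcl.isClosedMap _ hN'cl) ?_
    · exact Set.image_injective.mpr Subtype.val_injective h2
    · rintro _ ⟨_, ⟨a, ha, rfl⟩, rfl⟩
      exact ⟨f a, hN'inv (mem_image_of_mem f ha), rfl⟩

theorem thmRay : MSpace ↥(Ici (0:ℝ)) =
    {M' : Set ↥(Ici (0:ℝ)) | (M'.Finite ∧ M'.Nonempty) ∨ IsCantorSet M'} := by
  ext M'
  simp only [mem_setOf_eq]
  constructor
  · intro h
    rcases real_forward (ray_forward h) with ⟨hfin, hne⟩ | hc
    · exact Or.inl ⟨hfin.of_finite_image Subtype.val_injective.injOn, hne.of_image⟩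
    · exact Or.inr ((cantor_val_iff M').mpr hc)
  · intro h
    apply ray_backward
    rcases h with ⟨hfin, hne⟩ | hc
    · exact Or.inl ⟨hfin.image _, hne.image _⟩
    · exact Or.inr ((cantor_val_iff M').mp hc)

end Endgame

theorem stmt10' (Y : Type*) [TopologicalSpace Y]
    (h : Nonempty (Y ≃ₜ ℝ) ∨ Nonempty (Y ≃ₜ ↥(Set.Ici (0:ℝ)))) :
    MSpace Y = {M : Set Y | (M.Finite ∧ M.Nonempty) ∨ IsCantorSet M} := by
  cases h with
  | inl hne =>
    obtain ⟨e⟩ := hne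
    ext M
    have h1 : (e '' M ∈ MSpace ℝ) ↔
        (((e '' M).Finite ∧ (e '' M).Nonempty) ∨ IsCantorSet (e '' M)) := by
      rw [thmR]
      exact Iff.rfl
    have h2 := (mspace_image_iff e M).trans h1
    simp only [mem_setOf_eq]
    rw [h2]
    constructor
    · rintro (⟨hfin, hne'⟩ | hc)
      · exact Or.inl ⟨hfin.of_finite_image e.injective.injOn, hne'.of_image⟩
      · exact Or.inr ((cantor_image_iff e M).mpr hc)
    · rintro (⟨hfin, hne'⟩ | hc)
      · exact Or.inl ⟨hfin.image e, hne'.image e⟩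
      · exact Or.inr ((cantor_image_iff e M).mp hc)
  | inr hne =>
    obtain ⟨e⟩ := hne
    ext M
    have h1 : (e '' M ∈ MSpace ↥(Ici (0:ℝ))) ↔
        (((e '' M).Finite ∧ (e '' M).Nonempty) ∨ IsCantorSet (e '' M)) := by
      rw [thmRay]
      exact Iff.rfl
    have h2 := (mspace_image_iff e M).trans h1
    simp only [mem_setOf_eq]
    rw [h2]
    constructor
    · rintro (⟨hfin, hne'⟩ | hc)
      · exact Or.inl ⟨hfin.of_finite_image e.injective.injOn, hne'.of_image⟩
      · exact Or.inr ((cantor_image_iff e M).mpr hc)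
    · rintro (⟨hfin, hne'⟩ | hc)
      · exact Or.inl ⟨hfin.image e, hne'.image e⟩
      · exact Or.inr ((cantor_image_iff e M).mp hc)


/-- If `Y` is a line or a ray (homeomorphic to `ℝ` or to `[0,∞)`), then
`𝓜(Y)` is exactly the system of all nonempty finite sets and Cantor sets in `Y`. -/
theorem stmt10 (Y : Type*) [TopologicalSpace Y]
    (h : Nonempty (Y ≃ₜ ℝ) ∨ Nonempty (Y ≃ₜ ↥(Set.Ici (0:ℝ)))) :
    MSpace Y = {M : Set Y | (M.Finite ∧ M.Nonempty) ∨ IsCantorSet M} := by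
  exact stmt10' Y h
end
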